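/- arXiv:1508.04892 — 7 statements merged into one kernel-verified Lean document; each statement's English description precedes it below -/
import Mathlib

section
/- Fix p > 3 and A ∈ ℝ, and let φ : [0,∞) → ℝ be continuous with |φ(t)| ≤ 1 for all t. Then there exists a radius R₁ > 0 (depending only on p and A) with the following properties. Let X be the set of continuous functions ρ : [R₁,∞) → [−1,1] with lim_{r→∞} ρ(r) = 0, equipped with the metric d(ρ₁,ρ₂) = sup_{r ≥ R₁} |ρ₁(r) − ρ₂(r)|, and for ρ ∈ X define (Lρ)(r) = −∫_r^∞ ∫_s^∞ φ(t)·|ρ(t)+A|^{p−1}(ρ(t)+A)·t^{−(p−1)} dt ds for r ≥ R₁. Then: (i) for every ρ ∈ X the iterated improper integral converges absolutely and Lρ ∈ X; (ii) d(Lρ₁, Lρ₂) ≤ ½·d(ρ₁,ρ₂) for all ρ₁, ρ₂ ∈ X; (iii) L has a unique fixed point in X. -/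
open MeasureTheory Set Filter

/-- The pure power nonlinearity `F(u) = |u|^{p-1} u`. -/
noncomputable def nlF (p u : ℝ) : ℝ := |u| ^ (p - 1) * u

/-- Membership in the space `X` of continuous functions
`ρ : [R₁,∞) → [-1,1]` with `ρ(r) → 0` as `r → ∞`. -/
def memX (R₁ : ℝ) (ρ : ℝ → ℝ) : Prop :=
  ContinuousOn ρ (Ici R₁) ∧ (∀ r ∈ Ici R₁, ρ r ∈ Icc (-1 : ℝ) 1) ∧
    Tendsto ρ atTop (nhds 0)

/-- The map `(Lρ)(r) = -∫_r^∞ ∫_s^∞ φ(t) F(ρ(t)+A) t^{-(p-1)} dt ds`. -/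
noncomputable def Lmap (p A : ℝ) (φ ρ : ℝ → ℝ) (r : ℝ) : ℝ :=
  -∫ s in Ici r, ∫ t in Ici s, φ t * nlF p (ρ t + A) / t ^ (p - 1)

/-!
For `ρ ∈ X` we have `|ρ + A| ≤ 1 + |A|`, so the integrand of `L` is `O(t^{-(p-1)})`, and, `F` being
Lipschitz on `[A - 1, A + 1]`, the integrands for `ρ₁, ρ₂` differ by `O(d(ρ₁, ρ₂) t^{-(p-1)})`.
Integrating twice from `r` to `∞` costs two powers of `r`, so for `p > 3` both `|Lρ(r)|` and
`|Lρ₁(r) - Lρ₂(r)| / d(ρ₁, ρ₂)` are `O(r^{-(p-3)})`. Choosing `R₁` large makes `L` a `½`-contraction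
of `X` into itself. The Banach fixed-point theorem in the complete space of bounded continuous
functions on `[R₁, ∞)` with values in `[-1, 1]` gives a fixed point, which decays at infinity
because every `Lρ` does.
-/

open scoped Topology NNReal BoundedContinuousFunction

section nlF

variable {p : ℝ}

lemma continuous_nlF (hp : 1 ≤ p) : Continuous (nlF p) :=
  (continuous_abs.rpow_const fun _ => Or.inr (by linarith)).mul continuous_id

lemma abs_nlF (hp : p ≠ 0) (u : ℝ) : |nlF p u| = |u| ^ p := by
  rw [nlF, abs_mul, abs_of_nonneg (by positivity), ← Real.rpow_add_one' (abs_nonneg u) (by simpa),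
    sub_add_cancel]

lemma abs_nlF_le (hp : 0 < p) {u B : ℝ} (hu : |u| ≤ B) : |nlF p u| ≤ B ^ p := by
  rw [abs_nlF hp.ne']
  exact Real.rpow_le_rpow (abs_nonneg u) hu hp.le

lemma hasDerivAt_nlF (hp : 2 < p) (u : ℝ) : HasDerivAt (nlF p) (p * |u| ^ (p - 1)) u := by
  have hsq : |u| ^ (p - 1 - 2) * u * u = |u| ^ (p - 1) := by
    rw [mul_assoc, ← abs_mul_abs_self, ← mul_assoc,
      ← Real.rpow_add_one' (abs_nonneg u) (by linarith),
      ← Real.rpow_add_one' (abs_nonneg u) (by linarith)]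
    ring_nf
  exact ((hasDerivAt_abs_rpow u (by linarith : 1 < p - 1)).mul (hasDerivAt_id' u)).congr_deriv
    (by linear_combination (p - 1) * hsq)

lemma abs_nlF_sub_le (hp : 2 < p) {u v B : ℝ} (hu : |u| ≤ B) (hv : |v| ≤ B) :
    |nlF p u - nlF p v| ≤ p * B ^ (p - 1) * |u - v| := by
  have hderiv_le : ∀ x ∈ Icc (-B) B, ‖p * |x| ^ (p - 1)‖ ≤ p * B ^ (p - 1) := fun x hx => by
    rw [Real.norm_of_nonneg (by positivity)]
    gcongr
    · linarith
    · exact abs_le.2 hx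
  simpa only [Real.norm_eq_abs] using Convex.norm_image_sub_le_of_norm_hasDerivWithin_le
    (fun x _ => (hasDerivAt_nlF hp x).hasDerivWithinAt) hderiv_le (convex_Icc _ _)
    (abs_le.1 hv) (abs_le.1 hu)

end nlF

section Tails

variable {f g : ℝ → ℝ} {c q C : ℝ}

lemma integrableOn_Ici_mul_rpow (hc : 0 < c) (hq : 1 < q) :
    IntegrableOn (fun t => C * t ^ (-q)) (Ici c) :=
  (integrableOn_Ici_iff_integrableOn_Ioi).2
    ((integrableOn_Ioi_rpow_of_lt (by linarith) hc).const_mul C)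

lemma integrableOn_Ici_of_abs_le_mul_rpow (hc : 0 < c) (hq : 1 < q)
    (hf : AEStronglyMeasurable f (volume.restrict (Ici c)))
    (hb : ∀ t ∈ Ici c, |f t| ≤ C * t ^ (-q)) : IntegrableOn f (Ici c) :=
  (integrableOn_Ici_mul_rpow hc hq).mono' hf
    ((ae_restrict_iff' measurableSet_Ici).2 (ae_of_all _ hb))

lemma abs_setIntegral_Ici_le_of_abs_le_mul_rpow (hc : 0 < c) (hq : 1 < q)
    (hb : ∀ t ∈ Ici c, |f t| ≤ C * t ^ (-q)) :
    |∫ t in Ici c, f t| ≤ C / (q - 1) * c ^ (-(q - 1)) :=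
  calc |∫ t in Ici c, f t| ≤ ∫ t in Ici c, C * t ^ (-q) := by
        rw [← Real.norm_eq_abs]
        exact norm_integral_le_of_norm_le (integrableOn_Ici_mul_rpow hc hq)
          ((ae_restrict_iff' measurableSet_Ici).2 (ae_of_all _ hb))
    _ = C / (q - 1) * c ^ (-(q - 1)) := by
        rw [integral_Ici_eq_integral_Ioi, integral_const_mul,
          integral_Ioi_rpow_of_lt (by linarith) hc, show -q + 1 = -(q - 1) by ring, neg_div_neg_eq]
        ring

lemma setIntegral_Ici_tail_sub {r : ℝ} (hf : ∀ s ∈ Ici r, IntegrableOn f (Ici s))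
    (hg : ∀ s ∈ Ici r, IntegrableOn g (Ici s))
    (hf' : IntegrableOn (fun s => ∫ t in Ici s, f t) (Ici r))
    (hg' : IntegrableOn (fun s => ∫ t in Ici s, g t) (Ici r)) :
    ∫ s in Ici r, ∫ t in Ici s, (f t - g t) =
      (∫ s in Ici r, ∫ t in Ici s, f t) - ∫ s in Ici r, ∫ t in Ici s, g t := by
  rw [← integral_sub hf' hg']
  exact setIntegral_congr_fun measurableSet_Ici fun s hs => integral_sub (hf s hs) (hg s hs)

/-- `doubleTailRate q r = ∫_r^∞ ∫_s^∞ t^{-q} dt ds` for `q > 2`. -/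
noncomputable def doubleTailRate (q r : ℝ) : ℝ := r ^ (-(q - 2)) / ((q - 1) * (q - 2))

lemma tendsto_doubleTailRate_atTop (hq : 2 < q) : Tendsto (doubleTailRate q) atTop (𝓝 0) := by
  have := (tendsto_rpow_neg_atTop (by linarith : 0 < q - 2)).div_const ((q - 1) * (q - 2))
  rwa [zero_div] at this

lemma doubleTailRate_nonneg (hq : 2 < q) {r : ℝ} (hr : 0 ≤ r) : 0 ≤ doubleTailRate q r :=
  div_nonneg (Real.rpow_nonneg hr _) (by nlinarith)

lemma integrableOn_Ici_of_continuousOn (hc : 0 < c) (hq : 1 < q) (hf : ContinuousOn f (Ici c))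
    (hb : ∀ t ∈ Ici c, |f t| ≤ C * t ^ (-q)) : ∀ s ∈ Ici c, IntegrableOn f (Ici s) :=
  fun s (hs : c ≤ s) => integrableOn_Ici_of_abs_le_mul_rpow (hc.trans_le hs) hq
    ((hf.mono (Ici_subset_Ici.2 hs)).aestronglyMeasurable measurableSet_Ici)
    fun t ht => hb t (hs.trans ht)

lemma abs_tail_le (hc : 0 < c) (hq : 1 < q) (hb : ∀ t ∈ Ici c, |f t| ≤ C * t ^ (-q)) :
    ∀ s ∈ Ici c, |∫ t in Ici s, f t| ≤ C / (q - 1) * s ^ (-(q - 1)) :=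
  fun s (hs : c ≤ s) => abs_setIntegral_Ici_le_of_abs_le_mul_rpow (hc.trans_le hs) hq
    fun t ht => hb t (hs.trans ht)

lemma continuousOn_tail (hc : 0 < c) (hq : 1 < q) (hf : ContinuousOn f (Ici c))
    (hb : ∀ t ∈ Ici c, |f t| ≤ C * t ^ (-q)) :
    ContinuousOn (fun s => ∫ t in Ici s, f t) (Ici c) :=
  (integrableOn_Ici_of_continuousOn hc hq hf hb c self_mem_Ici).continuousOn_Ici_primitive_Ici

lemma integrableOn_tail (hc : 0 < c) (hq : 2 < q) (hf : ContinuousOn f (Ici c))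
    (hb : ∀ t ∈ Ici c, |f t| ≤ C * t ^ (-q)) :
    ∀ r ∈ Ici c, IntegrableOn (fun s => ∫ t in Ici s, f t) (Ici r) :=
  integrableOn_Ici_of_continuousOn (q := q - 1) hc (by linarith)
    (continuousOn_tail hc (by linarith) hf hb) (abs_tail_le hc (by linarith) hb)

lemma abs_doubleTail_le (hc : 0 < c) (hq : 2 < q)
    (hb : ∀ t ∈ Ici c, |f t| ≤ C * t ^ (-q)) :
    ∀ r ∈ Ici c, |∫ s in Ici r, ∫ t in Ici s, f t| ≤ C * doubleTailRate q r := by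
  intro r hr
  convert abs_tail_le (q := q - 1) hc (by linarith) (abs_tail_le hc (by linarith) hb) r hr using 1
  rw [doubleTailRate, show q - 1 - 1 = q - 2 by ring, div_div]
  ring

lemma continuousOn_doubleTail (hc : 0 < c) (hq : 2 < q) (hf : ContinuousOn f (Ici c))
    (hb : ∀ t ∈ Ici c, |f t| ≤ C * t ^ (-q)) :
    ContinuousOn (fun r => ∫ s in Ici r, ∫ t in Ici s, f t) (Ici c) :=
  (integrableOn_tail hc hq hf hb c self_mem_Ici).continuousOn_Ici_primitive_Ici

end Tails

section Lmap

variable {p A R d : ℝ} {φ ρ ρ₁ ρ₂ : ℝ → ℝ}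

noncomputable def lmapIntegrand (p A : ℝ) (φ ρ : ℝ → ℝ) (t : ℝ) : ℝ :=
  φ t * nlF p (ρ t + A) / t ^ (p - 1)

lemma Lmap_eq (r : ℝ) :
    Lmap p A φ ρ r = -∫ s in Ici r, ∫ t in Ici s, lmapIntegrand p A φ ρ t := rfl

lemma abs_mul_div_rpow_le {a x B t : ℝ} (ht : 0 < t) (ha : |a| ≤ 1) (hx : |x| ≤ B) :
    |a * x / t ^ (p - 1)| ≤ B * t ^ (-(p - 1)) := by
  rw [Real.rpow_neg ht.le, ← div_eq_mul_inv, abs_div, abs_of_pos (Real.rpow_pos_of_pos ht _), abs_mul]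
  gcongr
  simpa using mul_le_mul ha hx (abs_nonneg x) zero_le_one

lemma abs_add_le_one_add_abs {x : ℝ} (hx : x ∈ Icc (-1 : ℝ) 1) (A : ℝ) : |x + A| ≤ 1 + |A| :=
  (abs_add_le x A).trans (by gcongr; exact abs_le.2 hx)

lemma continuousOn_lmapIntegrand (hp : 1 ≤ p) (hR : 0 < R) (hφc : ContinuousOn φ (Ici 0))
    (hρc : ContinuousOn ρ (Ici R)) : ContinuousOn (lmapIntegrand p A φ ρ) (Ici R) := by
  have hpos : ∀ t ∈ Ici R, 0 < t := fun t (ht : R ≤ t) => hR.trans_le ht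
  refine ContinuousOn.div ?_ ?_ fun t ht => (Real.rpow_pos_of_pos (hpos t ht) _).ne'
  · exact (hφc.mono (Ici_subset_Ici.2 hR.le)).mul
      ((continuous_nlF hp).comp_continuousOn (hρc.add continuousOn_const))
  · exact continuousOn_id.rpow_const fun t ht => Or.inl (hpos t ht).ne'

lemma abs_lmapIntegrand_le (hp : 0 < p) (hR : 0 < R) (hφb : ∀ t ∈ Ici 0, |φ t| ≤ 1)
    (hρb : MapsTo ρ (Ici R) (Icc (-1) 1)) :
    ∀ t ∈ Ici R, |lmapIntegrand p A φ ρ t| ≤ (1 + |A|) ^ p * t ^ (-(p - 1)) :=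
  fun t (ht : R ≤ t) => abs_mul_div_rpow_le (hR.trans_le ht) (hφb t (hR.le.trans ht))
    (abs_nlF_le hp (abs_add_le_one_add_abs (hρb ht) A))

lemma abs_lmapIntegrand_sub_le (hp : 2 < p) (hR : 0 < R) (hφb : ∀ t ∈ Ici 0, |φ t| ≤ 1)
    (hρ₁b : MapsTo ρ₁ (Ici R) (Icc (-1) 1)) (hρ₂b : MapsTo ρ₂ (Ici R) (Icc (-1) 1))
    (hd : ∀ t ∈ Ici R, |ρ₁ t - ρ₂ t| ≤ d) :
    ∀ t ∈ Ici R, |lmapIntegrand p A φ ρ₁ t - lmapIntegrand p A φ ρ₂ t| ≤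
      p * (1 + |A|) ^ (p - 1) * d * t ^ (-(p - 1)) := by
  intro t (ht : R ≤ t)
  rw [lmapIntegrand, lmapIntegrand, ← sub_div, ← mul_sub]
  refine abs_mul_div_rpow_le (hR.trans_le ht) (hφb t (hR.le.trans ht)) ?_
  calc |nlF p (ρ₁ t + A) - nlF p (ρ₂ t + A)|
      ≤ p * (1 + |A|) ^ (p - 1) * |ρ₁ t + A - (ρ₂ t + A)| :=
        abs_nlF_sub_le hp (abs_add_le_one_add_abs (hρ₁b ht) A) (abs_add_le_one_add_abs (hρ₂b ht) A)
    _ ≤ p * (1 + |A|) ^ (p - 1) * d := by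
        rw [add_sub_add_right_eq_sub]
        gcongr
        exact hd t ht

lemma integrableOn_lmapIntegrand (hp : 2 < p) (hR : 0 < R) (hφc : ContinuousOn φ (Ici 0))
    (hφb : ∀ t ∈ Ici 0, |φ t| ≤ 1) (hρc : ContinuousOn ρ (Ici R))
    (hρb : MapsTo ρ (Ici R) (Icc (-1) 1)) :
    ∀ s ∈ Ici R, IntegrableOn (lmapIntegrand p A φ ρ) (Ici s) :=
  integrableOn_Ici_of_continuousOn hR (by linarith)
    (continuousOn_lmapIntegrand (by linarith) hR hφc hρc)
    (abs_lmapIntegrand_le (by linarith) hR hφb hρb)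

lemma integrableOn_tail_lmapIntegrand (hp : 3 < p) (hR : 0 < R) (hφc : ContinuousOn φ (Ici 0))
    (hφb : ∀ t ∈ Ici 0, |φ t| ≤ 1) (hρc : ContinuousOn ρ (Ici R))
    (hρb : MapsTo ρ (Ici R) (Icc (-1) 1)) :
    ∀ r ∈ Ici R, IntegrableOn (fun s => ∫ t in Ici s, lmapIntegrand p A φ ρ t) (Ici r) :=
  integrableOn_tail hR (by linarith) (continuousOn_lmapIntegrand (by linarith) hR hφc hρc)
    (abs_lmapIntegrand_le (by linarith) hR hφb hρb)

lemma continuousOn_Lmap (hp : 3 < p) (hR : 0 < R) (hφc : ContinuousOn φ (Ici 0))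
    (hφb : ∀ t ∈ Ici 0, |φ t| ≤ 1) (hρc : ContinuousOn ρ (Ici R))
    (hρb : MapsTo ρ (Ici R) (Icc (-1) 1)) : ContinuousOn (Lmap p A φ ρ) (Ici R) :=
  (continuousOn_doubleTail hR (by linarith) (continuousOn_lmapIntegrand (by linarith) hR hφc hρc)
    (abs_lmapIntegrand_le (by linarith) hR hφb hρb)).neg

lemma abs_Lmap_le (hp : 3 < p) (hR : 0 < R) (hφb : ∀ t ∈ Ici 0, |φ t| ≤ 1)
    (hρb : MapsTo ρ (Ici R) (Icc (-1) 1)) :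
    ∀ r ∈ Ici R, |Lmap p A φ ρ r| ≤ (1 + |A|) ^ p * doubleTailRate (p - 1) r := fun r hr => by
  rw [Lmap_eq, abs_neg]
  exact abs_doubleTail_le hR (by linarith) (abs_lmapIntegrand_le (by linarith) hR hφb hρb) r hr

lemma tendsto_Lmap_atTop (hp : 3 < p) (hR : 0 < R) (hφb : ∀ t ∈ Ici 0, |φ t| ≤ 1)
    (hρb : MapsTo ρ (Ici R) (Icc (-1) 1)) : Tendsto (Lmap p A φ ρ) atTop (𝓝 0) := by
  refine squeeze_zero_norm' ?_ (by
    simpa using (tendsto_doubleTailRate_atTop (q := p - 1) (by linarith)).const_mul ((1 + |A|) ^ p))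
  filter_upwards [eventually_ge_atTop R] with r hr
  exact abs_Lmap_le hp hR hφb hρb r hr

lemma abs_Lmap_sub_le (hp : 3 < p) (hR : 0 < R) (hφc : ContinuousOn φ (Ici 0))
    (hφb : ∀ t ∈ Ici 0, |φ t| ≤ 1) (hρ₁c : ContinuousOn ρ₁ (Ici R))
    (hρ₁b : MapsTo ρ₁ (Ici R) (Icc (-1) 1)) (hρ₂c : ContinuousOn ρ₂ (Ici R))
    (hρ₂b : MapsTo ρ₂ (Ici R) (Icc (-1) 1)) (hd : ∀ t ∈ Ici R, |ρ₁ t - ρ₂ t| ≤ d) :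
    ∀ r ∈ Ici R, |Lmap p A φ ρ₁ r - Lmap p A φ ρ₂ r| ≤
      p * (1 + |A|) ^ (p - 1) * d * doubleTailRate (p - 1) r := fun r (hr : R ≤ r) => by
  have hi₁ := integrableOn_lmapIntegrand (A := A) (by linarith : 2 < p) hR hφc hφb hρ₁c hρ₁b
  have hi₂ := integrableOn_lmapIntegrand (A := A) (by linarith : 2 < p) hR hφc hφb hρ₂c hρ₂b
  rw [Lmap_eq, Lmap_eq, neg_sub_neg, abs_sub_comm, ← setIntegral_Ici_tail_sub
    (fun s hs => hi₁ s (hr.trans hs)) (fun s hs => hi₂ s (hr.trans hs))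
    (integrableOn_tail_lmapIntegrand hp hR hφc hφb hρ₁c hρ₁b r hr)
    (integrableOn_tail_lmapIntegrand hp hR hφc hφb hρ₂c hρ₂b r hr)]
  exact abs_doubleTail_le (q := p - 1) hR (by linarith)
    (abs_lmapIntegrand_sub_le (by linarith) hR hφb hρ₁b hρ₂b hd) r hr

end Lmap

section FixedPoint

variable {α : Type*} {s : Set α} {a b : ℝ}

lemma abs_sub_le_iSup_abs_sub {ρ₁ ρ₂ : α → ℝ} (h₁ : MapsTo ρ₁ s (Icc a b))
    (h₂ : MapsTo ρ₂ s (Icc a b)) {t : α} (ht : t ∈ s) :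
    |ρ₁ t - ρ₂ t| ≤ ⨆ r : s, |ρ₁ r - ρ₂ r| :=
  le_ciSup (f := fun r : s => |ρ₁ r - ρ₂ r|)
    ⟨b - a, by rintro _ ⟨r, rfl⟩; exact Real.dist_le_of_mem_Icc (h₁ r.2) (h₂ r.2)⟩ ⟨t, ht⟩

lemma mapsTo_extend_val {f : s → ℝ} {t : Set ℝ} (hf : ∀ x, f x ∈ t) :
    MapsTo (Function.extend Subtype.val f 0) s t := fun x hx =>
  (Subtype.val_injective.extend_apply f 0 ⟨x, hx⟩).symm ▸ hf ⟨x, hx⟩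

variable [TopologicalSpace α] {ρ : α → ℝ}

lemma continuousOn_extend_val {f : s → ℝ} (hf : Continuous f) :
    ContinuousOn (Function.extend Subtype.val f 0) s := by
  rw [continuousOn_iff_continuous_domRestrict]
  convert hf
  funext x
  exact Subtype.val_injective.extend_apply _ _ _

noncomputable def boundedRestrict (hc : ContinuousOn ρ s) (hb : MapsTo ρ s (Icc a b)) :
    s →ᵇ ℝ :=
  .mkOfBound ⟨s.domRestrict ρ, hc.domRestrict⟩ (b - a) fun x y =>
    Real.dist_le_of_mem_Icc (hb x.2) (hb y.2)

@[simp]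
lemma boundedRestrict_apply (hc : ContinuousOn ρ s) (hb : MapsTo ρ s (Icc a b)) (x : s) :
    boundedRestrict hc hb x = ρ x := rfl

variable {K : ℝ≥0} {L : (α → ℝ) → α → ℝ}

lemma eqOn_of_contraction (hK : K < 1)
    (hcontr : ∀ ρ₁ ρ₂, ContinuousOn ρ₁ s → MapsTo ρ₁ s (Icc a b) → ContinuousOn ρ₂ s →
      MapsTo ρ₂ s (Icc a b) → ∀ d, 0 ≤ d → (∀ t ∈ s, |ρ₁ t - ρ₂ t| ≤ d) →
      ∀ r ∈ s, |L ρ₁ r - L ρ₂ r| ≤ K * d)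
    {ρ₁ ρ₂ : α → ℝ} (hc₁ : ContinuousOn ρ₁ s) (hb₁ : MapsTo ρ₁ s (Icc a b))
    (hc₂ : ContinuousOn ρ₂ s) (hb₂ : MapsTo ρ₂ s (Icc a b))
    (hfix₁ : EqOn (L ρ₁) ρ₁ s) (hfix₂ : EqOn (L ρ₂) ρ₂ s) : EqOn ρ₁ ρ₂ s := by
  set d := dist (boundedRestrict hc₁ hb₁) (boundedRestrict hc₂ hb₂)
  have hd : ∀ t ∈ s, |ρ₁ t - ρ₂ t| ≤ d := fun t ht =>
    BoundedContinuousFunction.dist_coe_le_dist (f := boundedRestrict hc₁ hb₁)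
      (g := boundedRestrict hc₂ hb₂) (⟨t, ht⟩ : s)
  have hdK : d ≤ K * d := (BoundedContinuousFunction.dist_le (by positivity)).2 fun x => by
    rw [Real.dist_eq, boundedRestrict_apply, boundedRestrict_apply, ← hfix₁ x.2, ← hfix₂ x.2]
    exact hcontr ρ₁ ρ₂ hc₁ hb₁ hc₂ hb₂ d dist_nonneg hd x x.2
  have hd0 : d = 0 := by
    have : (K : ℝ) < 1 := hK
    nlinarith [dist_nonneg (x := boundedRestrict hc₁ hb₁) (y := boundedRestrict hc₂ hb₂)]
  intro t ht
  simpa [hd0, sub_eq_zero] using hd t ht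

lemma exists_unique_eqOn_fixed_of_contraction (hab : a ≤ b) (hK : K < 1)
    (hmaps : ∀ ρ, ContinuousOn ρ s → MapsTo ρ s (Icc a b) →
      ContinuousOn (L ρ) s ∧ MapsTo (L ρ) s (Icc a b))
    (hcontr : ∀ ρ₁ ρ₂, ContinuousOn ρ₁ s → MapsTo ρ₁ s (Icc a b) → ContinuousOn ρ₂ s →
      MapsTo ρ₂ s (Icc a b) → ∀ d, 0 ≤ d → (∀ t ∈ s, |ρ₁ t - ρ₂ t| ≤ d) →
      ∀ r ∈ s, |L ρ₁ r - L ρ₂ r| ≤ K * d) :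
    ∃ ρ, ContinuousOn ρ s ∧ MapsTo ρ s (Icc a b) ∧ EqOn (L ρ) ρ s ∧
      ∀ ρ', ContinuousOn ρ' s → MapsTo ρ' s (Icc a b) → EqOn (L ρ') ρ' s → EqOn ρ' ρ s := by
  let Y : Set (s →ᵇ ℝ) := {f | ∀ x, f x ∈ Icc a b}
  have hY : IsClosed Y := by
    simp only [Y, ofPred_forall]
    exact isClosed_iInter fun x => isClosed_Icc.preimage (continuous_eval_const x)
  have : CompleteSpace Y := hY.isComplete.completeSpace_coe
  have : Nonempty Y := ⟨⟨.const s a, fun _ => left_mem_Icc.2 hab⟩⟩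
  let ext (f : Y) : α → ℝ := Function.extend Subtype.val (f : s →ᵇ ℝ) 0
  have ext_apply (f : Y) (x : s) : ext f x = (f : s →ᵇ ℝ) x :=
    Subtype.val_injective.extend_apply _ _ x
  have ext_cont (f : Y) : ContinuousOn (ext f) s :=
    continuousOn_extend_val (f : s →ᵇ ℝ).continuous
  have ext_maps (f : Y) : MapsTo (ext f) s (Icc a b) := mapsTo_extend_val f.2
  let T (f : Y) : Y := ⟨boundedRestrict (hmaps _ (ext_cont f) (ext_maps f)).1
    (hmaps _ (ext_cont f) (ext_maps f)).2, fun x => (hmaps _ (ext_cont f) (ext_maps f)).2 x.2⟩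
  have hT : ContractingWith K T := by
    refine ⟨hK, LipschitzWith.of_dist_le_mul fun f g => ?_⟩
    refine (BoundedContinuousFunction.dist_le (by positivity)).2 fun x => ?_
    refine hcontr _ _ (ext_cont f) (ext_maps f) (ext_cont g) (ext_maps g) _ dist_nonneg
      (fun t ht => ?_) x x.2
    rw [ext_apply f ⟨t, ht⟩, ext_apply g ⟨t, ht⟩, Subtype.dist_eq]
    exact BoundedContinuousFunction.dist_coe_le_dist (f := (f : s →ᵇ ℝ)) (g := g) ⟨t, ht⟩
  set f := ContractingWith.fixedPoint T hT
  have hfix : EqOn (L (ext f)) (ext f) s := fun x hx =>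
    (congrArg (fun f : Y => (f : s →ᵇ ℝ) ⟨x, hx⟩) hT.fixedPoint_isFixedPt).trans
      (ext_apply f ⟨x, hx⟩).symm
  exact ⟨ext f, ext_cont f, ext_maps f, hfix, fun ρ' hc' hb' hfix' =>
    eqOn_of_contraction hK hcontr hc' hb' (ext_cont f) (ext_maps f) hfix' hfix⟩

end FixedPoint

section ContractionRadius

variable {p A R d : ℝ} {φ ρ ρ₁ ρ₂ : ℝ → ℝ}

/-- On `[-1 - |A|, 1 + |A|]`, which contains the values of `ρ + A` for `ρ ∈ X`, `F` is bounded by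
`(1 + |A|) ^ p` and Lipschitz with constant `p * (1 + |A|) ^ (p - 1)`. -/
def IsContractionRadius (p A R : ℝ) : Prop :=
  0 < R ∧ ∀ r ∈ Ici R,
    ((1 + |A|) ^ p + p * (1 + |A|) ^ (p - 1)) * doubleTailRate (p - 1) r ≤ 1 / 2

lemma exists_isContractionRadius (hp : 3 < p) (A : ℝ) : ∃ R, IsContractionRadius p A R := by
  have hsmall := ((tendsto_doubleTailRate_atTop (q := p - 1) (by linarith)).const_mul
    ((1 + |A|) ^ p + p * (1 + |A|) ^ (p - 1))).eventually (eventually_le_nhds (by norm_num :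
      ((1 + |A|) ^ p + p * (1 + |A|) ^ (p - 1)) * 0 < 1 / 2))
  obtain ⟨R, hR⟩ := eventually_atTop.1 hsmall
  exact ⟨max R 1, by positivity, fun r hr => hR r (le_of_max_le_left hr)⟩

lemma mapsTo_Lmap (hp : 3 < p) (hR : IsContractionRadius p A R) (hφb : ∀ t ∈ Ici 0, |φ t| ≤ 1)
    (hρb : MapsTo ρ (Ici R) (Icc (-1) 1)) : MapsTo (Lmap p A φ ρ) (Ici R) (Icc (-1) 1) := by
  intro r hr
  have hrate := doubleTailRate_nonneg (q := p - 1) (by linarith) (hR.1.le.trans hr)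
  have hLip : 0 ≤ p * (1 + |A|) ^ (p - 1) := by positivity
  refine abs_le.1 ((abs_Lmap_le hp hR.1 hφb hρb r hr).trans ?_)
  nlinarith [hR.2 r hr, mul_nonneg hLip hrate]

lemma abs_Lmap_sub_le_half (hp : 3 < p) (hR : IsContractionRadius p A R)
    (hφc : ContinuousOn φ (Ici 0)) (hφb : ∀ t ∈ Ici 0, |φ t| ≤ 1)
    (hρ₁c : ContinuousOn ρ₁ (Ici R)) (hρ₁b : MapsTo ρ₁ (Ici R) (Icc (-1) 1))
    (hρ₂c : ContinuousOn ρ₂ (Ici R)) (hρ₂b : MapsTo ρ₂ (Ici R) (Icc (-1) 1)) (hd0 : 0 ≤ d)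
    (hd : ∀ t ∈ Ici R, |ρ₁ t - ρ₂ t| ≤ d) :
    ∀ r ∈ Ici R, |Lmap p A φ ρ₁ r - Lmap p A φ ρ₂ r| ≤ 1 / 2 * d := fun r hr => by
  have hrate := doubleTailRate_nonneg (q := p - 1) (by linarith) (hR.1.le.trans hr)
  have hM : 0 ≤ (1 + |A|) ^ p := by positivity
  refine (abs_Lmap_sub_le hp hR.1 hφc hφb hρ₁c hρ₁b hρ₂c hρ₂b hd r hr).trans ?_
  nlinarith [hR.2 r hr, mul_nonneg hM hrate, mul_nonneg hd0 (mul_nonneg hM hrate)]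

end ContractionRadius

/-- for `p > 3` and `A ∈ ℝ` there is a radius `R₁ > 0`
(depending only on `p` and `A`) such that, for every continuous
`φ : [0,∞) → [-1,1]`: (i) for each `ρ ∈ X` the iterated improper integral
defining `Lρ` converges absolutely and `Lρ ∈ X`; (ii) `L` is a
`½`-contraction on `X` in the supremum metric; (iii) `L` has a fixed point
in `X`, unique up to equality on `[R₁,∞)`. -/
theorem contraction_fixed_point (p A : ℝ) (hp : 3 < p) :
    ∃ R₁ : ℝ, 0 < R₁ ∧
      ∀ φ : ℝ → ℝ, ContinuousOn φ (Ici (0 : ℝ)) →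
        (∀ t ∈ Ici (0 : ℝ), |φ t| ≤ 1) →
        -- (i) absolute convergence of the iterated integral, and `Lρ ∈ X`
        ((∀ ρ : ℝ → ℝ, memX R₁ ρ →
            (∀ s ∈ Ici R₁,
              IntegrableOn (fun t => φ t * nlF p (ρ t + A) / t ^ (p - 1))
                (Ici s)) ∧
            (∀ r ∈ Ici R₁,
              IntegrableOn
                (fun s => ∫ t in Ici s, φ t * nlF p (ρ t + A) / t ^ (p - 1))
                (Ici r)) ∧
            memX R₁ (Lmap p A φ ρ)) ∧
        -- (ii) `d(Lρ₁, Lρ₂) ≤ ½ d(ρ₁, ρ₂)`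
        (∀ ρ₁ ρ₂ : ℝ → ℝ, memX R₁ ρ₁ → memX R₁ ρ₂ → ∀ r ∈ Ici R₁,
            |Lmap p A φ ρ₁ r - Lmap p A φ ρ₂ r| ≤
              (1 / 2) * ⨆ r' : Ici R₁, |ρ₁ r' - ρ₂ r'|) ∧
        -- (iii) existence and uniqueness of the fixed point of `L` in `X`
        (∃ ρ : ℝ → ℝ, memX R₁ ρ ∧ (∀ r ∈ Ici R₁, Lmap p A φ ρ r = ρ r) ∧
            ∀ ρ' : ℝ → ℝ, memX R₁ ρ' → (∀ r ∈ Ici R₁, Lmap p A φ ρ' r = ρ' r) →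
              ∀ r ∈ Ici R₁, ρ' r = ρ r)) := by
  obtain ⟨R₁, hR₁⟩ := exists_isContractionRadius hp A
  refine ⟨R₁, hR₁.1, fun φ hφc hφb => ?_⟩
  have hmemX ρ (hc : ContinuousOn ρ (Ici R₁)) (hb : MapsTo ρ (Ici R₁) (Icc (-1) 1)) :
      memX R₁ (Lmap p A φ ρ) :=
    ⟨continuousOn_Lmap hp hR₁.1 hφc hφb hc hb, mapsTo_Lmap hp hR₁ hφb hb,
      tendsto_Lmap_atTop hp hR₁.1 hφb hb⟩
  obtain ⟨ρ, hρc, hρb, hfix, huniq⟩ := exists_unique_eqOn_fixed_of_contraction (s := Ici R₁)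
    (K := 2⁻¹) (by norm_num : (-1 : ℝ) ≤ 1) (by norm_num)
    (fun ρ hc hb => ⟨(hmemX ρ hc hb).1, (hmemX ρ hc hb).2.1⟩)
    fun ρ₁ ρ₂ hc₁ hb₁ hc₂ hb₂ d hd0 hd => by
      simpa using abs_Lmap_sub_le_half hp hR₁ hφc hφb hc₁ hb₁ hc₂ hb₂ hd0 hd
  refine ⟨fun ρ hρ => ⟨integrableOn_lmapIntegrand (by linarith) hR₁.1 hφc hφb hρ.1 hρ.2.1,
    integrableOn_tail_lmapIntegrand hp hR₁.1 hφc hφb hρ.1 hρ.2.1, hmemX ρ hρ.1 hρ.2.1⟩,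
    fun ρ₁ ρ₂ h₁ h₂ => abs_Lmap_sub_le_half hp hR₁ hφc hφb h₁.1 h₁.2.1 h₂.1 h₂.2.1 ?_
      fun t ht => abs_sub_le_iSup_abs_sub h₁.2.1 h₂.2.1 ht,
    ρ, ⟨hρc, hρb, ?_⟩, hfix, fun ρ' hρ' hfix' => huniq ρ' hρ'.1 hρ'.2.1 hfix'⟩
  · exact Real.iSup_nonneg fun _ => abs_nonneg _
  · exact (hmemX ρ hρc hρb).2.2.congr' ((eventually_ge_atTop R₁).mono fun r hr => hfix hr)
end

section
/- Let ε ∈ (0, 1/2) and r₀ > 0. Let q : (0,r₀) → ℝ be continuous with lim_{r→0⁺} r²·q(r) = 0, and let W be a radial, twice continuously differentiable solution of −ΔW = q(|x|)·W on the punctured ball B(0,r₀) \ {0} in ℝ³ such that lim_{|x|→0⁺} |x|^{1−ε}·W(x) = 0. Then there exist constants r₁ ∈ (0,r₀) and C₁ > 0 such that |W(x)| ≤ C₁·|x|^{−ε} for all x with 0 < |x| < r₁. -/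
open Set Filter

/-- The Euclidean Laplacian on `ℝ³`: the sum of the second partial derivatives
along the coordinate directions. -/
noncomputable def laplacian (f : EuclideanSpace ℝ (Fin 3) → ℝ)
    (x : EuclideanSpace ℝ (Fin 3)) : ℝ :=
  ∑ i : Fin 3,
    fderiv ℝ (fun y => fderiv ℝ f y (EuclideanSpace.single i 1)) x
      (EuclideanSpace.single i 1)

/-!
For radial `W x = w ‖x‖` the equation reads `w'' + 2 w' / r = -q w`, i.e. `u'' = -q u` for
`u r = r * w r`. Near `0` we have `r ^ 2 * |q r| ≤ ε (1 - ε) / 2` and `|u r| ≤ r ^ ε`.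
Both `r ^ ε` and `r ^ (1 - ε)` solve `u'' = -ε (1 - ε) u / r ^ 2`, so integrating `u'' = -q u`
twice (first from `b` down to `r`, then from `0` up to `r`) turns a bound
`|u| ≤ A r ^ (1 - ε) + D r ^ ε` into `|u| ≤ (|u' b| b ^ ε + A / 2) r ^ (1 - ε) + D / 2 r ^ ε`.
Iterating sends `D` to `0` and leaves `|u r| ≤ 2 |u' b| b ^ ε r ^ (1 - ε)`, that is
`|W x| ≤ C ‖x‖ ^ (-ε)`.
-/

open Topology
open scoped RealInnerProductSpace

lemma abs_sub_le_sub_of_abs_deriv_le {f f' H H' : ℝ → ℝ} {a b : ℝ} (hab : a ≤ b)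
    (hf : ∀ x ∈ Icc a b, HasDerivAt f (f' x) x) (hH : ∀ x ∈ Icc a b, HasDerivAt H (H' x) x)
    (hle : ∀ x ∈ Icc a b, |f' x| ≤ H' x) : |f b - f a| ≤ H b - H a :=
  image_norm_le_of_norm_deriv_right_le_deriv_boundary' (f := fun x => f x - f a)
    (B := fun x => H x - H a)
    (fun x hx => ((hf x hx).sub_const _).continuousAt.continuousWithinAt)
    (fun x hx => ((hf x (Ico_subset_Icc_self hx)).sub_const _).hasDerivWithinAt)
    (by simp) (fun x hx => ((hH x hx).sub_const _).continuousAt.continuousWithinAt)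
    (fun x hx => ((hH x (Ico_subset_Icc_self hx)).sub_const _).hasDerivWithinAt)
    (fun x hx => hle x (Ico_subset_Icc_self hx)) (right_mem_Icc.2 hab)

section SecondOrderInequality

variable {u v g : ℝ → ℝ} {ε b : ℝ}

lemma abs_deriv_le_of_abs_second_deriv_le (hε : 0 < ε) (hε1 : ε < 1) {A D : ℝ} (hA : 0 ≤ A)
    (hD : 0 ≤ D)
    (hvg : ∀ s ∈ Ioc 0 b, HasDerivAt v (g s) s)
    (hg : ∀ s ∈ Ioc 0 b, |g s| ≤ ε * (1 - ε) / 2 * |u s| / s ^ 2)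
    (hu : ∀ s ∈ Ioc 0 b, |u s| ≤ A * s ^ (1 - ε) + D * s ^ ε) :
    ∀ s ∈ Ioc 0 b, |v s| ≤ |v b| + (1 - ε) / 2 * A * s ^ (-ε) + ε / 2 * D * s ^ (ε - 1) := by
  intro s ⟨hs, hsb⟩
  have hsub : Icc s b ⊆ Ioc 0 b := fun σ hσ => ⟨hs.trans_le hσ.1, hσ.2⟩
  set H : ℝ → ℝ := fun σ => -((1 - ε) / 2 * A * σ ^ (-ε) + ε / 2 * D * σ ^ (ε - 1))
  have hH : ∀ σ ∈ Icc s b,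
      HasDerivAt H (ε * (1 - ε) / 2 * (A * σ ^ (1 - ε) + D * σ ^ ε) / σ ^ 2) σ := by
    intro σ hσ
    have hσ : 0 < σ := (hsub hσ).1
    refine ((((Real.hasDerivAt_rpow_const (Or.inl hσ.ne')).const_mul ((1 - ε) / 2 * A)).add
      ((Real.hasDerivAt_rpow_const (Or.inl hσ.ne')).const_mul (ε / 2 * D))).neg).congr_deriv ?_
    simp only [Real.rpow_sub hσ, Real.rpow_neg hσ.le, Real.rpow_one]
    field_simp
    ring
  have key := abs_sub_le_sub_of_abs_deriv_le hsb (fun σ hσ => hvg σ (hsub hσ)) hH fun σ hσ =>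
    (hg σ (hsub hσ)).trans (by gcongr; exact hu σ (hsub hσ))
  have hHb : H b ≤ 0 := by
    have hb : 0 < b := hs.trans_le hsb
    simp only [H, neg_nonpos]
    have : 0 ≤ 1 - ε := by linarith
    positivity
  calc |v s| ≤ |v b| + |v b - v s| := by
        linarith [abs_sub_abs_le_abs_sub (v s) (v b), abs_sub_comm (v s) (v b)]
    _ ≤ _ := by simp only [H] at key hHb ⊢; linarith

lemma abs_le_of_abs_deriv_le (hε : 0 < ε) (hε1 : ε < 1) {A B D : ℝ}
    (hu0 : Tendsto u (𝓝[>] 0) (𝓝 0)) (huv : ∀ s ∈ Ioc 0 b, HasDerivAt u (v s) s)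
    (hv : ∀ s ∈ Ioc 0 b, |v s| ≤ B + (1 - ε) / 2 * A * s ^ (-ε) + ε / 2 * D * s ^ (ε - 1)) :
    ∀ t ∈ Ioc 0 b, |u t| ≤ B * t + A / 2 * t ^ (1 - ε) + D / 2 * t ^ ε := by
  intro t ⟨ht, htb⟩
  set K : ℝ → ℝ := fun σ => B * σ + A / 2 * σ ^ (1 - ε) + D / 2 * σ ^ ε
  have hK : Continuous K := by
    have := Real.continuous_rpow_const (q := 1 - ε) (by linarith)
    have := Real.continuous_rpow_const (q := ε) hε.le
    fun_prop
  have hK0 : K 0 = 0 := by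
    simp [K, Real.zero_rpow hε.ne', Real.zero_rpow (sub_ne_zero.2 hε1.ne')]
  have hsub : ∀ r ∈ Ioo 0 t, Icc r t ⊆ Ioc 0 b := fun r hr σ hσ =>
    ⟨hr.1.trans_le hσ.1, hσ.2.trans htb⟩
  have hK' : ∀ σ, 0 < σ →
      HasDerivAt K (B + (1 - ε) / 2 * A * σ ^ (-ε) + ε / 2 * D * σ ^ (ε - 1)) σ := by
    intro σ hσ
    refine ((((hasDerivAt_id' σ).const_mul B).add
      ((Real.hasDerivAt_rpow_const (Or.inl hσ.ne')).const_mul (A / 2))).add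
      ((Real.hasDerivAt_rpow_const (Or.inl hσ.ne')).const_mul (D / 2))).congr_deriv ?_
    rw [show 1 - ε - 1 = -ε by ring]
    ring
  have hle : ∀ r ∈ Ioo 0 t, |u t| ≤ |u r| + K t - K r := fun r hr => by
    have := abs_sub_le_sub_of_abs_deriv_le hr.2.le (fun σ hσ => huv σ (hsub r hr hσ))
      (fun σ hσ => hK' σ (hsub r hr hσ).1) (fun σ hσ => hv σ (hsub r hr hσ))
    linarith [abs_sub_abs_le_abs_sub (u t) (u r)]
  have hlim : Tendsto (fun r => |u r| + K t - K r) (𝓝[>] 0) (𝓝 (|0| + K t - K 0)) :=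
    (hu0.abs.add_const _).sub ((hK.tendsto 0).mono_left nhdsWithin_le_nhds)
  rw [abs_zero, hK0, zero_add, sub_zero] at hlim
  exact ge_of_tendsto hlim (eventually_of_mem (Ioo_mem_nhdsGT ht) hle)

lemma abs_le_improve_of_abs_second_deriv_le (hε : 0 < ε) (hε1 : ε < 1) {A D : ℝ} (hA : 0 ≤ A)
    (hD : 0 ≤ D) (hu0 : Tendsto u (𝓝[>] 0) (𝓝 0)) (huv : ∀ s ∈ Ioc 0 b, HasDerivAt u (v s) s)
    (hvg : ∀ s ∈ Ioc 0 b, HasDerivAt v (g s) s)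
    (hg : ∀ s ∈ Ioc 0 b, |g s| ≤ ε * (1 - ε) / 2 * |u s| / s ^ 2)
    (hu : ∀ s ∈ Ioc 0 b, |u s| ≤ A * s ^ (1 - ε) + D * s ^ ε) :
    ∀ t ∈ Ioc 0 b, |u t| ≤ (|v b| * b ^ ε + A / 2) * t ^ (1 - ε) + D / 2 * t ^ ε := by
  intro t ht
  have hut := abs_le_of_abs_deriv_le hε hε1 hu0 huv
    (abs_deriv_le_of_abs_second_deriv_le hε hε1 hA hD hvg hg hu) t ht
  have ht_le : t ≤ b ^ ε * t ^ (1 - ε) := calc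
    t = t ^ ε * t ^ (1 - ε) := by rw [← Real.rpow_add ht.1, add_sub_cancel, Real.rpow_one]
    _ ≤ b ^ ε * t ^ (1 - ε) :=
      mul_le_mul_of_nonneg_right (Real.rpow_le_rpow ht.1.le ht.2 hε.le)
        (Real.rpow_nonneg ht.1.le _)
  have : |v b| * t ≤ |v b| * (b ^ ε * t ^ (1 - ε)) := by gcongr
  linarith

lemma abs_le_rpow_of_abs_second_deriv_le (hε : 0 < ε) (hε1 : ε < 1)
    (huv : ∀ s ∈ Ioc 0 b, HasDerivAt u (v s) s) (hvg : ∀ s ∈ Ioc 0 b, HasDerivAt v (g s) s)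
    (hg : ∀ s ∈ Ioc 0 b, |g s| ≤ ε * (1 - ε) / 2 * |u s| / s ^ 2)
    (hu : ∀ s ∈ Ioc 0 b, |u s| ≤ s ^ ε) :
    ∀ t ∈ Ioc 0 b, |u t| ≤ 2 * (|v b| * b ^ ε) * t ^ (1 - ε) := by
  intro t ht
  have hb : 0 < b := ht.1.trans_le ht.2
  have hu0 : Tendsto u (𝓝[>] 0) (𝓝 0) := by
    have hpow : Tendsto (fun s : ℝ => s ^ ε) (𝓝[>] 0) (𝓝 0) := by
      simpa [Real.zero_rpow hε.ne'] using
        ((Real.continuous_rpow_const hε.le).tendsto 0).mono_left nhdsWithin_le_nhds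
    refine squeeze_zero_norm' ?_ hpow
    filter_upwards [Ioo_mem_nhdsGT_of_mem ⟨le_rfl, hb⟩] with s hs
    exact hu s ⟨hs.1, hs.2.le⟩
  set C := |v b| * b ^ ε
  have hC : 0 ≤ C := by positivity
  have hiter (n : ℕ) : ∀ s ∈ Ioc 0 b, |u s| ≤ 2 * C * s ^ (1 - ε) + (1 / 2) ^ n * s ^ ε := by
    induction n with
    | zero =>
      intro s hs
      have : 0 ≤ 2 * C * s ^ (1 - ε) := mul_nonneg (by linarith) (Real.rpow_nonneg hs.1.le _)
      simpa using (hu s hs).trans (le_add_of_nonneg_left this)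
    | succ n ih =>
      intro s hs
      convert abs_le_improve_of_abs_second_deriv_le hε hε1 (by linarith) (by positivity) hu0 huv
        hvg hg ih s hs using 2 <;> ring
  have hlim : Tendsto (fun n : ℕ => 2 * C * t ^ (1 - ε) + (1 / 2 : ℝ) ^ n * t ^ ε) atTop
      (𝓝 (2 * C * t ^ (1 - ε) + 0 * t ^ ε)) :=
    tendsto_const_nhds.add
      ((tendsto_pow_atTop_nhds_zero_of_lt_one (by norm_num) (by norm_num)).mul_const _)
  rw [zero_mul, add_zero] at hlim
  exact ge_of_tendsto' hlim fun n => hiter n t ht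

end SecondOrderInequality

section RadialFunctions

variable {F : Type*} [NormedAddCommGroup F] [InnerProductSpace ℝ F]

lemma hasFDerivAt_norm_of_ne_zero {x : F} (hx : x ≠ 0) :
    HasFDerivAt (fun y : F => ‖y‖) (‖x‖⁻¹ • innerSL ℝ x) x := by
  have hsqrt := (Real.hasDerivAt_sqrt (pow_pos (norm_pos_iff.2 hx) 2).ne').comp_hasFDerivAt x
    (hasStrictFDerivAt_norm_sq x).hasFDerivAt
  simp only [Function.comp_def, Real.sqrt_sq (norm_nonneg _)] at hsqrt
  refine hsqrt.congr_fderiv ?_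
  ext v
  simp only [FunLike.coe_smul, Pi.smul_apply, smul_eq_mul]
  field_simp
  ring

lemma fderiv_fderiv_comp_norm_apply {w w' : ℝ → ℝ} {w'' : ℝ} {x : F} (hx : x ≠ 0)
    (hw : ∀ᶠ r in 𝓝 ‖x‖, HasDerivAt w (w' r) r) (hw' : HasDerivAt w' w'' ‖x‖) (e : F) :
    fderiv ℝ (fun y => fderiv ℝ (fun z => w ‖z‖) y e) x e
      = w'' * ⟪x, e⟫ ^ 2 / ‖x‖ ^ 2 + w' ‖x‖ * (‖e‖ ^ 2 - ⟪x, e⟫ ^ 2 / ‖x‖ ^ 2) / ‖x‖ := by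
  have hN : 0 < ‖x‖ := norm_pos_iff.2 hx
  have hfirst : (fun y => fderiv ℝ (fun z => w ‖z‖) y e)
      =ᶠ[𝓝 x] fun y => w' ‖y‖ * (‖y‖⁻¹ * ⟪e, y⟫) := by
    filter_upwards [eventually_ne_nhds hx, (continuous_norm.tendsto x).eventually hw]
      with y hy hwy
    have h : HasFDerivAt (fun z => w ‖z‖) _ y :=
      hwy.comp_hasFDerivAt y (hasFDerivAt_norm_of_ne_zero hy)
    rw [h.fderiv]
    simp only [smul_apply, coe_innerSL_apply, smul_eq_mul, real_inner_comm e]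
  have hnorm := hasFDerivAt_norm_of_ne_zero hx
  have hsecond : HasFDerivAt (fun y => w' ‖y‖ * (‖y‖⁻¹ * ⟪e, y⟫)) _ x :=
    (hw'.comp_hasFDerivAt x hnorm).mul
      (((hasDerivAt_inv hN.ne').comp_hasFDerivAt x hnorm).mul (innerSL ℝ e).hasFDerivAt)
  rw [hfirst.fderiv_eq, hsecond.fderiv]
  simp only [add_apply, smul_apply, coe_innerSL_apply, smul_eq_mul, Function.comp_apply,
    real_inner_self_eq_norm_sq, real_inner_comm e]
  field_simp
  ring

end RadialFunctions

lemma laplacian_comp_norm {w w' : ℝ → ℝ} {w'' : ℝ} {x : EuclideanSpace ℝ (Fin 3)} (hx : x ≠ 0)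
    (hw : ∀ᶠ r in 𝓝 ‖x‖, HasDerivAt w (w' r) r) (hw' : HasDerivAt w' w'' ‖x‖) :
    laplacian (fun y => w ‖y‖) x = w'' + 2 * w' ‖x‖ / ‖x‖ := by
  have hN : 0 < ‖x‖ := norm_pos_iff.2 hx
  have hx2 := EuclideanSpace.real_norm_sq_eq x
  simp only [Fin.sum_univ_three] at hx2
  simp only [laplacian, fderiv_fderiv_comp_norm_apply hx hw hw', Fin.sum_univ_three,
    EuclideanSpace.inner_single_right, PiLp.norm_single, norm_one, conj_trivial]
  field_simp
  linear_combination (w' ‖x‖ - w'' * ‖x‖) * hx2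

lemma hasDerivAt_mul_id_of_laplacian_comp_norm {w q : ℝ → ℝ} {r₀ r : ℝ}
    (hw : ContDiffOn ℝ 2 w (Ioo 0 r₀))
    (heq : ∀ x : EuclideanSpace ℝ (Fin 3), x ≠ 0 → ‖x‖ < r₀ →
      -laplacian (fun y => w ‖y‖) x = q ‖x‖ * w ‖x‖) (hr : r ∈ Ioo 0 r₀) :
    HasDerivAt (fun s => s * w s) (w r + r * deriv w r) r ∧
      HasDerivAt (fun s => w s + s * deriv w s) (-(q r * (r * w r))) r := by
  have hw' : ∀ s ∈ Ioo 0 r₀, HasDerivAt w (deriv w s) s := fun s hs =>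
    ((hw.differentiableOn two_ne_zero).differentiableAt (isOpen_Ioo.mem_nhds hs)).hasDerivAt
  have hw'' : HasDerivAt (deriv w) (deriv (deriv w) r) r :=
    (((hw.deriv_of_isOpen isOpen_Ioo (by norm_num)).differentiableOn one_ne_zero).differentiableAt
      (isOpen_Ioo.mem_nhds hr)).hasDerivAt
  set x : EuclideanSpace ℝ (Fin 3) := r • EuclideanSpace.single 0 1
  have hxr : ‖x‖ = r := by simp [x, norm_smul, hr.1.le]
  have hx : x ≠ 0 := norm_pos_iff.1 (hxr ▸ hr.1)
  have hradial := heq x hx (hxr ▸ hr.2)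
  rw [laplacian_comp_norm hx (hxr ▸ eventually_of_mem (isOpen_Ioo.mem_nhds hr) hw') (hxr ▸ hw''),
    hxr] at hradial
  constructor
  · exact ((hasDerivAt_id' r).mul (hw' r hr)).congr_deriv (by rw [one_mul])
  · refine ((hw' r hr).add ((hasDerivAt_id' r).mul hw'')).congr_deriv ?_
    have hcancel : 2 * deriv w r / r * r = 2 * deriv w r := div_mul_cancel₀ _ hr.1.ne'
    linear_combination (-r) * hradial - hcancel

theorem exists_abs_le_rpow_neg_of_radial_ode {w v q : ℝ → ℝ} {ε r₀ : ℝ} (hε : 0 < ε)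
    (hε1 : ε < 1) (hr₀ : 0 < r₀) (hq : Tendsto (fun r => r ^ 2 * q r) (𝓝[>] 0) (𝓝 0))
    (hlim : Tendsto (fun r => r ^ (1 - ε) * w r) (𝓝[>] 0) (𝓝 0))
    (hode : ∀ r ∈ Ioo 0 r₀,
      HasDerivAt (fun s => s * w s) (v r) r ∧ HasDerivAt v (-(q r * (r * w r))) r) :
    ∃ b ∈ Ioo 0 r₀, ∃ C > 0, ∀ t ∈ Ioc 0 b, |w t| ≤ C * t ^ (-ε) := by
  set δ := ε * (1 - ε) / 2
  have hδ : 0 < δ := half_pos (mul_pos hε (sub_pos.2 hε1))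
  have hsmall : ∀ᶠ r in 𝓝[>] 0, |r ^ 2 * q r| ≤ δ ∧ |r ^ (1 - ε) * w r| ≤ 1 :=
    (hq.abs.eventually (eventually_le_nhds (by rwa [abs_zero]))).and
      (hlim.abs.eventually (eventually_le_nhds (by rw [abs_zero]; exact one_pos)))
  obtain ⟨c, hc, hcsmall⟩ := mem_nhdsGT_iff_exists_Ioc_subset.1 hsmall
  set b := min c (r₀ / 2)
  have hb : b ∈ Ioo 0 r₀ := ⟨lt_min hc (by linarith), (min_le_right _ _).trans_lt (by linarith)⟩
  have hsub : Ioc 0 b ⊆ Ioo 0 r₀ := fun s hs => ⟨hs.1, hs.2.trans_lt hb.2⟩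
  have hsubc : Ioc 0 b ⊆ Ioc 0 c := Ioc_subset_Ioc_right (min_le_left _ _)
  have hg : ∀ s ∈ Ioc 0 b, |-(q s * (s * w s))| ≤ δ * |s * w s| / s ^ 2 := by
    intro s hs
    have hs2 : 0 < s ^ 2 := pow_pos hs.1 2
    have hq' : |q s| * s ^ 2 ≤ δ := by
      simpa [abs_mul, abs_of_pos hs2, mul_comm] using (hcsmall (hsubc hs)).1
    rw [abs_neg, abs_mul, le_div_iff₀ hs2]
    nlinarith [abs_nonneg (s * w s)]
  have hu : ∀ s ∈ Ioc 0 b, |s * w s| ≤ s ^ ε := by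
    intro s hs
    have hsplit : s * w s = s ^ ε * (s ^ (1 - ε) * w s) := by
      rw [← mul_assoc, ← Real.rpow_add hs.1, add_sub_cancel, Real.rpow_one]
    rw [hsplit, abs_mul, abs_of_pos (Real.rpow_pos_of_pos hs.1 _)]
    exact mul_le_of_le_one_right (Real.rpow_nonneg hs.1.le _) (hcsmall (hsubc hs)).2
  have hbound := abs_le_rpow_of_abs_second_deriv_le hε hε1 (fun s hs => (hode s (hsub hs)).1)
    (fun s hs => (hode s (hsub hs)).2) hg hu
  have hC : 0 ≤ 2 * (|v b| * b ^ ε) := by have := Real.rpow_nonneg hb.1.le ε; positivity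
  refine ⟨b, hb, 2 * (|v b| * b ^ ε) + 1, by linarith, fun t ht => ?_⟩
  have hsplit : t ^ (1 - ε) = t * t ^ (-ε) := by
    rw [sub_eq_add_neg, Real.rpow_add ht.1, Real.rpow_one]
  have ht' := hbound t ht
  rw [abs_mul, abs_of_pos ht.1, hsplit, mul_left_comm, mul_le_mul_iff_right₀ ht.1] at ht'
  exact ht'.trans (by nlinarith [Real.rpow_nonneg ht.1.le (-ε)])

theorem almost_local_boundedness_general (ε r₀ : ℝ) (hε : ε ∈ Ioo (0 : ℝ) (1 / 2))
    (hr₀ : 0 < r₀) (q : ℝ → ℝ)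
    (hq : Tendsto (fun r => r ^ 2 * q r) (nhdsWithin 0 (Ioi 0)) (nhds 0))
    (W : EuclideanSpace ℝ (Fin 3) → ℝ)
    (hrad : ∀ x y : EuclideanSpace ℝ (Fin 3), ‖x‖ = ‖y‖ → W x = W y)
    (hW : ContDiffOn ℝ 2 W {x : EuclideanSpace ℝ (Fin 3) | x ≠ 0 ∧ ‖x‖ < r₀})
    (heq : ∀ x : EuclideanSpace ℝ (Fin 3), x ≠ 0 → ‖x‖ < r₀ →
      -laplacian W x = q ‖x‖ * W x)
    (hWlim : Tendsto (fun x : EuclideanSpace ℝ (Fin 3) => ‖x‖ ^ (1 - ε) * W x)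
      (nhdsWithin 0 {x : EuclideanSpace ℝ (Fin 3) | x ≠ 0}) (nhds 0)) :
    ∃ r₁ ∈ Ioo 0 r₀, ∃ C₁ > (0 : ℝ), ∀ x : EuclideanSpace ℝ (Fin 3),
      x ≠ 0 → ‖x‖ < r₁ → |W x| ≤ C₁ * ‖x‖ ^ (-ε) := by
  obtain ⟨hε0, hε2⟩ := hε
  set e : EuclideanSpace ℝ (Fin 3) := EuclideanSpace.single 0 1
  have he : ‖e‖ = 1 := by simp [e]
  set w : ℝ → ℝ := fun r => W (r • e)
  have hWw : W = fun y => w ‖y‖ :=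
    funext fun y => hrad _ _ (by simp [norm_smul, he])
  have hw : ContDiffOn ℝ 2 w (Ioo 0 r₀) :=
    hW.comp (contDiff_id.smul contDiff_const).contDiffOn fun r hr =>
      ⟨smul_ne_zero hr.1.ne' (by simp [e]), by simpa [norm_smul, he, abs_of_pos hr.1] using hr.2⟩
  have hsmul : Tendsto (fun r : ℝ => r • e) (𝓝[>] 0) (𝓝[{x | x ≠ 0}] 0) :=
    tendsto_nhdsWithin_iff.2
      ⟨((continuous_id.smul continuous_const).tendsto' 0 0 (zero_smul ℝ e)).mono_left
        nhdsWithin_le_nhds,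
      eventually_nhdsWithin_of_forall fun r hr => smul_ne_zero (ne_of_gt hr) (by simp [e])⟩
  have hlim : Tendsto (fun r => r ^ (1 - ε) * w r) (𝓝[>] 0) (𝓝 0) :=
    (hWlim.comp hsmul).congr' (eventually_nhdsWithin_of_forall fun r hr => by
      simp [w, norm_smul, he, abs_of_pos (show (0 : ℝ) < r from hr)])
  simp only [hWw] at heq
  obtain ⟨b, hb, C, hC, hbound⟩ := exists_abs_le_rpow_neg_of_radial_ode hε0 (by linarith) hr₀ hq
    hlim fun r hr => hasDerivAt_mul_id_of_laplacian_comp_norm hw heq hr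
  refine ⟨b, hb, C, hC, fun x hx hxb => ?_⟩
  rw [hWw]
  exact hbound ‖x‖ ⟨norm_pos_iff.2 hx, hxb.le⟩

/-- local boundedness of a radial solution of `-ΔW = q(|x|) W`
near the origin, given `r² q(r) → 0` as `r → 0⁺` and `|x|^{1-ε} W(x) → 0`. -/
theorem almost_local_boundedness (ε r₀ : ℝ) (hε : ε ∈ Ioo (0 : ℝ) (1 / 2))
    (hr₀ : 0 < r₀) (q : ℝ → ℝ) (hqc : ContinuousOn q (Ioo 0 r₀))
    (hq : Tendsto (fun r => r ^ 2 * q r) (nhdsWithin 0 (Ioi 0)) (nhds 0))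
    (W : EuclideanSpace ℝ (Fin 3) → ℝ)
    (hrad : ∀ x y : EuclideanSpace ℝ (Fin 3), ‖x‖ = ‖y‖ → W x = W y)
    (hW : ContDiffOn ℝ 2 W {x : EuclideanSpace ℝ (Fin 3) | x ≠ 0 ∧ ‖x‖ < r₀})
    (heq : ∀ x : EuclideanSpace ℝ (Fin 3), x ≠ 0 → ‖x‖ < r₀ →
      -laplacian W x = q ‖x‖ * W x)
    (hWlim : Tendsto (fun x : EuclideanSpace ℝ (Fin 3) => ‖x‖ ^ (1 - ε) * W x)
      (nhdsWithin 0 {x : EuclideanSpace ℝ (Fin 3) | x ≠ 0}) (nhds 0)) :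
    ∃ r₁ ∈ Ioo 0 r₀, ∃ C₁ > (0 : ℝ), ∀ x : EuclideanSpace ℝ (Fin 3),
      x ≠ 0 → ‖x‖ < r₁ → |W x| ≤ C₁ * ‖x‖ ^ (-ε) :=
  almost_local_boundedness_general ε r₀ hε hr₀ q hq W hrad hW heq hWlim
end

section
/- Let r₁ > 0, ε ∈ (0,1/2), and let η : (0,r₁) → ℝ be continuous with η(r) > 0 for all r ∈ (0,r₁). Suppose v : (0,r₁) → ℝ is twice continuously differentiable, satisfies v''(r) + (2ε/r)·v'(r) = η(r)·v(r) for all r ∈ (0,r₁), satisfies v(r) > 0 for all r ∈ (0,r₁), and lim_{r→0⁺} v(r) = 0. Then v'(r) > 0 for all r ∈ (0,r₁). -/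
/-!
Multiplying the equation by the integrating factor `r ^ (2ε)` turns it into
`(r ^ (2ε) v')' = r ^ (2ε) η v > 0`, so `r ↦ r ^ (2ε) v'(r)` is strictly increasing.
If `v'(r₀) ≤ 0`, then `v' < 0` on `(0, r₀)`, so `v` decreases on `(0, r₀]` and
`v(r₀) ≤ lim_{r → 0⁺} v(r) = 0`, contradicting `v > 0`.
-/

open Set Filter Topology

theorem hasDerivAt_rpow_mul {g : ℝ → ℝ} {g' r : ℝ} (a : ℝ) (hr : 0 < r)
    (hg : HasDerivAt g g' r) :
    HasDerivAt (fun x => x ^ a * g x) (r ^ a * (g' + a / r * g r)) r := by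
  refine ((Real.hasDerivAt_rpow_const (p := a) (Or.inl hr.ne')).mul hg).congr_deriv ?_
  rw [Real.rpow_sub hr, Real.rpow_one]
  field_simp
  ring

theorem strictMonoOn_rpow_mul_deriv {v : ℝ → ℝ} {a b : ℝ} (hv : ContDiffOn ℝ 2 v (Ioo 0 b))
    (h : ∀ r ∈ Ioo 0 b, 0 < deriv (deriv v) r + a / r * deriv v r) :
    StrictMonoOn (fun r => r ^ a * deriv v r) (Ioo 0 b) := by
  have hv' : DifferentiableOn ℝ (deriv v) (Ioo 0 b) :=
    (hv.deriv_of_isOpen (m := 1) isOpen_Ioo (by norm_num)).differentiableOn (by norm_num)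
  have hderiv : ∀ r ∈ Ioo 0 b,
      HasDerivAt (fun x => x ^ a * deriv v x)
        (r ^ a * (deriv (deriv v) r + a / r * deriv v r)) r := fun r hr =>
    hasDerivAt_rpow_mul a hr.1 (hv'.differentiableAt (isOpen_Ioo.mem_nhds hr)).hasDerivAt
  refine strictMonoOn_of_deriv_pos (convex_Ioo 0 b)
    (fun r hr => (hderiv r hr).continuousAt.continuousWithinAt) fun r hr => ?_
  rw [interior_Ioo] at hr
  rw [(hderiv r hr).deriv]
  exact mul_pos (Real.rpow_pos_of_pos hr.1 a) (h r hr)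

theorem AntitoneOn.le_of_tendsto_nhdsGT {v : ℝ → ℝ} {a b l : ℝ} (hab : a < b)
    (hv : AntitoneOn v (Ioc a b)) (hlim : Tendsto v (𝓝[>] a) (𝓝 l)) : v b ≤ l :=
  ge_of_tendsto hlim <| by
    filter_upwards [Ioo_mem_nhdsGT hab] with r hr
    exact hv ⟨hr.1, hr.2.le⟩ ⟨hab, le_rfl⟩ hr.2.le

theorem derivative_positive_general (r₁ ε : ℝ) (η v : ℝ → ℝ)
    (hη : ∀ r ∈ Ioo 0 r₁, 0 < η r)
    (hv : ContDiffOn ℝ 2 v (Ioo 0 r₁))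
    (hode : ∀ r ∈ Ioo 0 r₁,
      deriv (deriv v) r + (2 * ε / r) * deriv v r = η r * v r)
    (hpos : ∀ r ∈ Ioo 0 r₁, 0 < v r)
    (hlim : Tendsto v (nhdsWithin 0 (Ioi 0)) (nhds 0)) :
    ∀ r ∈ Ioo 0 r₁, 0 < deriv v r := by
  intro r₀ hr₀
  by_contra! hle
  have hmono := strictMonoOn_rpow_mul_deriv hv fun r hr => by
    rw [hode r hr]; exact mul_pos (hη r hr) (hpos r hr)
  have hneg : ∀ r ∈ Ioo 0 r₀, deriv v r < 0 := fun r hr => by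
    have hlt : r ^ (2 * ε) * deriv v r < 0 :=
      (hmono ⟨hr.1, hr.2.trans hr₀.2⟩ hr₀ hr.2).trans_le
        (mul_nonpos_of_nonneg_of_nonpos (Real.rpow_nonneg hr₀.1.le _) hle)
    exact neg_of_mul_neg_right hlt (Real.rpow_nonneg hr.1.le _)
  have hanti : StrictAntiOn v (Ioc 0 r₀) :=
    strictAntiOn_of_deriv_neg (convex_Ioc 0 r₀)
      (hv.continuousOn.mono fun r hr => ⟨hr.1, hr.2.trans_lt hr₀.2⟩)
      (by rwa [interior_Ioc])
  exact (hpos r₀ hr₀).not_ge (hanti.antitoneOn.le_of_tendsto_nhdsGT hr₀.1 hlim)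

/-- monotonicity step.  A positive `C²` solution of
`v'' + (2ε/r) v' = η v` on `(0, r₁)` with `η > 0`, `ε ∈ (0,1/2)` and
`v(r) → 0` as `r → 0⁺` has strictly positive derivative on `(0, r₁)`. -/
theorem derivative_positive (r₁ ε : ℝ) (hr₁ : 0 < r₁)
    (hε : ε ∈ Ioo (0 : ℝ) (1 / 2)) (η v : ℝ → ℝ)
    (hηc : ContinuousOn η (Ioo 0 r₁)) (hη : ∀ r ∈ Ioo 0 r₁, 0 < η r)
    (hv : ContDiffOn ℝ 2 v (Ioo 0 r₁))
    (hode : ∀ r ∈ Ioo 0 r₁,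
      deriv (deriv v) r + (2 * ε / r) * deriv v r = η r * v r)
    (hpos : ∀ r ∈ Ioo 0 r₁, 0 < v r)
    (hlim : Tendsto v (nhdsWithin 0 (Ioi 0)) (nhds 0)) :
    ∀ r ∈ Ioo 0 r₁, 0 < deriv v r :=
  derivative_positive_general r₁ ε η v hη hv hode hpos hlim
end

section
/- Fix p ∈ (3,5], r₀ ∈ (0,1], C₁ > 0 and ε ∈ (0, 1/p). Let φ : (0,r₀) → ℝ be continuous with |φ| ≤ 1, and suppose y : (0,r₀) → ℝ is twice continuously differentiable, satisfies |y(r)| ≤ C₁·r^{−ε} for all r ∈ (0,r₀), and the function r ↦ r·y(r) satisfies (d²/dr²)(r·y(r)) = −r·φ(r)·|y(r)|^{p−1}·y(r) on (0,r₀). Then the limit C₂ := lim_{r→0⁺} (d/dr)(r·y(r)) exists and is finite, and |y(r) − C₂| ≤ (C₁^p/2)·r for all r ∈ (0,r₀); in particular y extends to a continuous function on [0,r₀). -/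
/-!
Write `w(r) = r y(r)`. The growth bound `|y| ≤ C₁ r^{-ε}` with `εp < 1` and `r ≤ 1` gives
`|w''| = r |φ| |y|^p ≤ C₁^p r^{1-εp} ≤ C₁^p`, so `w'` is `C₁^p`-Lipschitz on `(0, r₀)`.
A Lipschitz function extends Lipschitz to `0`, which produces `C₂ = w'(0⁺)` together with
`|w'(r) - C₂| ≤ C₁^p r`. Since `w(0⁺) = 0` (as `ε < 1`), integrating once more, by comparing
`±(w(r) - C₂ r)` with `C₁^p r² / 2`, gives `|w(r) - C₂ r| ≤ C₁^p r² / 2`; dividing by `r`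
yields the bound on `y - C₂`, which also shows that `y(0) := C₂` extends `y` continuously.
-/

open Set Filter Topology
open scoped NNReal

theorem LipschitzOnWith.exists_tendsto_nhdsWithin_abs_sub_le {α : Type*}
    [PseudoMetricSpace α] {g : α → ℝ} {K : ℝ≥0} {s : Set α} (hg : LipschitzOnWith K g s) (x₀ : α) :
    ∃ L, Tendsto g (𝓝[s] x₀) (𝓝 L) ∧ ∀ x ∈ s, |g x - L| ≤ K * dist x x₀ := by
  obtain ⟨h, hh, hgh⟩ := hg.extend_real
  refine ⟨h x₀, ?_, fun x hx => ?_⟩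
  · exact ((hh.continuous.tendsto x₀).mono_left nhdsWithin_le_nhds).congr'
      hgh.eventuallyEq_nhdsWithin.symm
  · rw [hgh hx, ← Real.dist_eq]
    exact hh.dist_le_mul x x₀

theorem abs_mul_mul_rpow_mul_le {p ε C r c t : ℝ} (hp : 0 < p) (hεp : ε * p ≤ 1) (hC : 0 ≤ C)
    (hr : r ∈ Ioc 0 1) (hc : |c| ≤ 1) (ht : |t| ≤ C * r ^ (-ε)) :
    |r * c * |t| ^ (p - 1) * t| ≤ C ^ p := by
  obtain ⟨hr0, hr1⟩ := hr
  calc |r * c * |t| ^ (p - 1) * t| = r * |c| * |t| ^ p := by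
        rw [abs_mul, abs_mul, abs_mul, abs_of_pos hr0,
          abs_of_nonneg (Real.rpow_nonneg (abs_nonneg t) _), mul_assoc _ (|t| ^ (p - 1)),
          ← Real.rpow_add_one' (abs_nonneg t) (by rw [sub_add_cancel]; exact hp.ne'),
          sub_add_cancel]
    _ ≤ r * 1 * (C * r ^ (-ε)) ^ p := by gcongr
    _ = C ^ p * r ^ (1 - ε * p) := by
        rw [Real.mul_rpow hC (by positivity), ← Real.rpow_mul hr0.le, Real.rpow_sub hr0,
          Real.rpow_one, neg_mul, Real.rpow_neg hr0.le]
        field_simp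
    _ ≤ C ^ p :=
        mul_le_of_le_one_right (by positivity) (Real.rpow_le_one hr0.le hr1 (by linarith))

theorem tendsto_mul_nhdsGT_zero_of_abs_le_rpow_neg {y : ℝ → ℝ} {C ε : ℝ} (hε : ε < 1)
    (hy : ∀ᶠ r in 𝓝[>] 0, |y r| ≤ C * r ^ (-ε)) :
    Tendsto (fun r => r * y r) (𝓝[>] 0) (𝓝 0) := by
  have hpow : Tendsto (fun r : ℝ => C * r ^ (1 - ε)) (𝓝[>] 0) (𝓝 0) := by
    have h := ((Real.continuousAt_rpow_const 0 (1 - ε) (Or.inr (by linarith))).tendsto.mono_left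
      (nhdsWithin_le_nhds (s := Ioi 0))).const_mul C
    rwa [Real.zero_rpow (by linarith), mul_zero] at h
  refine squeeze_zero_norm' ?_ hpow
  filter_upwards [hy, self_mem_nhdsWithin] with r hr (hr0 : 0 < r)
  rw [Real.norm_eq_abs, abs_mul, abs_of_pos hr0, Real.rpow_sub hr0, Real.rpow_one,
    Real.rpow_neg hr0.le] at *
  calc r * |y r| ≤ r * (C * (r ^ ε)⁻¹) := by gcongr
    _ = C * (r / r ^ ε) := by ring

theorem tendsto_nhdsGT_of_abs_sub_le_mul {f : ℝ → ℝ} {a b L K : ℝ} (hab : a < b)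
    (h : ∀ x ∈ Ioo a b, |f x - L| ≤ K * (x - a)) : Tendsto f (𝓝[>] a) (𝓝 L) := by
  rw [tendsto_iff_norm_sub_tendsto_zero]
  have hlin : Tendsto (fun x => K * (x - a)) (𝓝[>] a) (𝓝 0) :=
    tendsto_nhdsWithin_of_tendsto_nhds
      ((by fun_prop : Continuous fun x => K * (x - a)).tendsto' a 0 (by simp))
  refine squeeze_zero' (.of_forall fun x => norm_nonneg _) ?_ hlin
  filter_upwards [Ioo_mem_nhdsGT hab] using h

theorem nonpos_of_deriv_nonpos_of_tendsto_zero {u : ℝ → ℝ} {a b : ℝ}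
    (hu : DifferentiableOn ℝ u (Ioo a b)) (hu' : ∀ x ∈ Ioo a b, deriv u x ≤ 0)
    (hlim : Tendsto u (𝓝[>] a) (𝓝 0)) : ∀ x ∈ Ioo a b, u x ≤ 0 := by
  intro x hx
  have hanti : AntitoneOn u (Ioo a b) :=
    antitoneOn_of_deriv_nonpos (convex_Ioo a b) hu.continuousOn (by rwa [interior_Ioo])
      (by rwa [interior_Ioo])
  refine ge_of_tendsto hlim ?_
  filter_upwards [Ioo_mem_nhdsGT hx.1] with s hs
  exact hanti ⟨hs.1, hs.2.trans hx.2⟩ hx hs.2.le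

theorem abs_sub_mul_le_of_abs_deriv_sub_le {f : ℝ → ℝ} {a b L M : ℝ}
    (hf : DifferentiableOn ℝ f (Ioo a b)) (hlim : Tendsto f (𝓝[>] a) (𝓝 0))
    (hf' : ∀ x ∈ Ioo a b, |deriv f x - L| ≤ M * (x - a)) :
    ∀ x ∈ Ioo a b, |f x - L * (x - a)| ≤ M / 2 * (x - a) ^ 2 := by
  have hlin : Tendsto (fun x => x - a) (𝓝[>] a) (𝓝 0) := by
    simpa using (tendsto_id.sub_const a).mono_left (nhdsWithin_le_nhds (a := a) (s := Ioi a))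
  have key : ∀ σ : ℝ, |σ| ≤ 1 →
      ∀ x ∈ Ioo a b, σ * (f x - L * (x - a)) - M / 2 * (x - a) ^ 2 ≤ 0 := by
    intro σ hσ
    have hderiv : ∀ x ∈ Ioo a b,
        HasDerivAt (fun x => σ * (f x - L * (x - a)) - M / 2 * (x - a) ^ 2)
          (σ * (deriv f x - L) - M * (x - a)) x := by
      intro x hx
      have hfx := (hf.differentiableAt (isOpen_Ioo.mem_nhds hx)).hasDerivAt
      have hlinx := (hasDerivAt_id' x).sub_const a
      exact (((hfx.sub (hlinx.const_mul L)).const_mul σ).sub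
        ((hlinx.pow 2).const_mul (M / 2))).congr_deriv (by ring)
    refine nonpos_of_deriv_nonpos_of_tendsto_zero
      (fun x hx => (hderiv x hx).differentiableAt.differentiableWithinAt) (fun x hx => ?_) ?_
    · rw [(hderiv x hx).deriv]
      have := (le_abs_self _).trans (abs_mul σ (deriv f x - L)).le
      nlinarith [abs_nonneg (deriv f x - L), hf' x hx]
    · simpa using
        ((hlim.sub (hlin.const_mul L)).const_mul σ).sub ((hlin.pow 2).const_mul (M / 2))
  intro x hx
  rw [abs_le]
  constructor <;> linarith [key 1 (by norm_num) x hx, key (-1) (by norm_num) x hx]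

theorem radial_extension_at_origin_general (p r₀ C₁ ε : ℝ) (hp : 3 < p)
    (hr₀ : r₀ ∈ Ioc (0 : ℝ) 1) (hC₁ : 0 < C₁) (hε : ε ∈ Ioo (0 : ℝ) (1 / p))
    (φ y : ℝ → ℝ)
    (hφb : ∀ r ∈ Ioo 0 r₀, |φ r| ≤ 1)
    (hy : ContDiffOn ℝ 2 y (Ioo 0 r₀))
    (hybd : ∀ r ∈ Ioo 0 r₀, |y r| ≤ C₁ * r ^ (-ε))
    (hode : ∀ r ∈ Ioo 0 r₀,
      deriv (deriv (fun s => s * y s)) r = -(r * φ r * |y r| ^ (p - 1) * y r)) :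
    ∃ C₂ : ℝ,
      Tendsto (deriv (fun s => s * y s)) (nhdsWithin 0 (Ioo 0 r₀)) (nhds C₂) ∧
      (∀ r ∈ Ioo 0 r₀, |y r - C₂| ≤ C₁ ^ p / 2 * r) ∧
      ∃ g : ℝ → ℝ, ContinuousOn g (Ico 0 r₀) ∧ ∀ r ∈ Ioo 0 r₀, g r = y r := by
  set w : ℝ → ℝ := fun s => s * y s
  have hw : ContDiffOn ℝ 2 w (Ioo 0 r₀) := contDiffOn_id.mul hy
  have hM : 0 ≤ C₁ ^ p := by positivity
  have hεp : ε * p ≤ 1 := ((lt_div_iff₀ (by linarith)).mp (by simpa using hε.2)).le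
  have hw'' : ∀ r ∈ Ioo 0 r₀, ‖deriv (deriv w) r‖₊ ≤ (C₁ ^ p).toNNReal := fun r hr => by
    rw [← NNReal.coe_le_coe, coe_nnnorm, Real.coe_toNNReal _ hM, hode r hr, Real.norm_eq_abs,
      abs_neg]
    exact abs_mul_mul_rpow_mul_le (by linarith) hεp hC₁.le ⟨hr.1, hr.2.le.trans hr₀.2⟩
      (hφb r hr) (hybd r hr)
  have hlip : LipschitzOnWith (C₁ ^ p).toNNReal (deriv w) (Ioo 0 r₀) :=
    (convex_Ioo 0 r₀).lipschitzOnWith_of_nnnorm_deriv_le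
      (fun x hx => ((hw.deriv_of_isOpen isOpen_Ioo (by norm_num)).differentiableOn one_ne_zero
        |>.differentiableAt (isOpen_Ioo.mem_nhds hx))) hw''
  obtain ⟨C₂, hlim, hC₂⟩ := hlip.exists_tendsto_nhdsWithin_abs_sub_le 0
  have hw0 : Tendsto w (𝓝[>] 0) (𝓝 0) :=
    tendsto_mul_nhdsGT_zero_of_abs_le_rpow_neg
      (hε.2.trans (by rw [div_lt_one] <;> linarith))
      (by filter_upwards [Ioo_mem_nhdsGT hr₀.1] using hybd)
  have hyC₂ : ∀ r ∈ Ioo 0 r₀, |y r - C₂| ≤ C₁ ^ p / 2 * r := by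
    intro r hr
    have hwC₂ := abs_sub_mul_le_of_abs_deriv_sub_le (hw.differentiableOn two_ne_zero) hw0
      (fun x hx => by simpa [hM, abs_of_pos hx.1] using hC₂ x hx) r hr
    rw [show w r - C₂ * (r - 0) = r * (y r - C₂) by ring, abs_mul, abs_of_pos hr.1] at hwC₂
    exact le_of_mul_le_mul_left (hwC₂.trans_eq (by ring)) hr.1
  exact ⟨C₂, hlim, hyC₂, extendFrom (Ioo 0 r₀) y,
    continuousOn_Ico_extendFrom_Ioo hy.continuousOn
      (tendsto_nhdsGT_of_abs_sub_le_mul hr₀.1 (by simpa using hyC₂)),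
    extendFrom_extends hy.continuousOn⟩

/-- if `y` is `C²` on `(0,r₀)` with `|y(r)| ≤ C₁ r^{-ε}`,
`ε ∈ (0,1/p)`, and `w(r) = r y(r)` satisfies `w'' = -r φ(r) |y|^{p-1} y`
with `|φ| ≤ 1`, then `w'` has a finite limit `C₂` at `0⁺`,
`|y(r) - C₂| ≤ (C₁^p/2) r`, and `y` extends continuously to `[0, r₀)`. -/
theorem radial_extension_at_origin (p r₀ C₁ ε : ℝ) (hp : 3 < p) (hp5 : p ≤ 5)
    (hr₀ : r₀ ∈ Ioc (0 : ℝ) 1) (hC₁ : 0 < C₁) (hε : ε ∈ Ioo (0 : ℝ) (1 / p))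
    (φ y : ℝ → ℝ) (hφc : ContinuousOn φ (Ioo 0 r₀))
    (hφb : ∀ r ∈ Ioo 0 r₀, |φ r| ≤ 1)
    (hy : ContDiffOn ℝ 2 y (Ioo 0 r₀))
    (hybd : ∀ r ∈ Ioo 0 r₀, |y r| ≤ C₁ * r ^ (-ε))
    (hode : ∀ r ∈ Ioo 0 r₀,
      deriv (deriv (fun s => s * y s)) r = -(r * φ r * |y r| ^ (p - 1) * y r)) :
    ∃ C₂ : ℝ,
      Tendsto (deriv (fun s => s * y s)) (nhdsWithin 0 (Ioo 0 r₀)) (nhds C₂) ∧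
      (∀ r ∈ Ioo 0 r₀, |y r - C₂| ≤ C₁ ^ p / 2 * r) ∧
      ∃ g : ℝ → ℝ, ContinuousOn g (Ico 0 r₀) ∧ ∀ r ∈ Ioo 0 r₀, g r = y r :=
  radial_extension_at_origin_general p r₀ C₁ ε hp hr₀ hC₁ hε φ y hφb hy hybd hode
end

section
/- Fix 3 < p < 5 and set s_p = 3/2 − 2/(p−1). Let Ũ₁, Ũ₂ : ℝ³ × ℝ → ℝ be measurable functions with finite mixed space–time norms ‖Ũ_j‖_{L^{2p/(1+s_p)}_t L^{2p/(2−s_p)}_x(ℝ×ℝ³)} < ∞ for j = 1, 2. Let (λ_{1,n}, t_{1,n}) and (λ_{2,n}, t_{2,n}) be sequences in (0,∞) × ℝ that are almost orthogonal, i.e. λ_{2,n}/λ_{1,n} + λ_{1,n}/λ_{2,n} + |t_{1,n} − t_{2,n}|/λ_{1,n} → ∞ as n → ∞, and define Ũ_{j,n}(x,t) = λ_{j,n}^{−(3/2−s_p)}·Ũ_j( x/λ_{j,n}, (t−t_{j,n})/λ_{j,n} ). Then ‖Ũ_{1,n}·Ũ_{2,n}‖_{L^{p/(1+s_p)}_t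 L^{p/(2−s_p)}_x(ℝ×ℝ³)} → 0 as n → ∞. -/
/-!
Write `(a, b) = (p/(1+s_p), p/(2-s_p))` and `α = 3/2 - s_p`, so that `3/(2b) + 1/(2a) = α`.
By Hölder's inequality and the invariance of the `L^{2a}_t L^{2b}_x` norm under
`U ↦ λ^{-α} U(x/λ, (t - t₀)/λ)`, the product of two
rescaled profiles is bounded in `L^a_t L^b_x` by the product of their norms, uniformly in the
parameters. Splitting each profile into a part bounded by `k` and supported in `|x|, |t| ≤ k`
plus a remainder that is small in norm, it is therefore enough to treat bounded compactly
supported profiles. For those the product vanishes identically once the time supports separate,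
`|t₁ - t₂| > (λ₁ + λ₂) k`. Otherwise, bounding the factor at the larger scale by `k` and
rescaling the other one gives a bound by `min (λ₁/λ₂, λ₂/λ₁) ^ α`, and almost orthogonality
then forces the scale ratio to degenerate: that minimum is at most `(2 + 2k)` divided by the
orthogonality functional.
-/

open MeasureTheory Filter ENNReal

/-- Mixed space–time norm `‖v‖_{L^a_t L^b_x (ℝ × ℝ³)}`, valued in `ℝ≥0∞`. -/
noncomputable def mixedNorm (a b : ℝ) (v : EuclideanSpace ℝ (Fin 3) × ℝ → ℝ) :
    ℝ≥0∞ :=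
  (∫⁻ t : ℝ, (∫⁻ x : EuclideanSpace ℝ (Fin 3),
      ENNReal.ofReal |v (x, t)| ^ b) ^ (a / b)) ^ (1 / a)

open Set Topology

section HaarDilation

variable {E : Type*} [NormedAddCommGroup E] [NormedSpace ℝ E] [MeasurableSpace E] [BorelSpace E]
  [FiniteDimensional ℝ E] (μ : Measure E) [μ.IsAddHaarMeasure]

theorem lintegral_comp_inv_smul_sub {g : E → ℝ≥0∞} (hg : Measurable g) {r : ℝ} (hr : 0 < r)
    (x₀ : E) :
    ∫⁻ x, g (r⁻¹ • (x - x₀)) ∂μ = ENNReal.ofReal (r ^ Module.finrank ℝ E) * ∫⁻ x, g x ∂μ := by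
  rw [lintegral_sub_right_eq_self (fun x => g (r⁻¹ • x)) x₀,
    ← lintegral_map hg (measurable_const_smul _), Measure.map_addHaar_smul μ (inv_ne_zero hr.ne'),
    lintegral_smul_measure, inv_pow, inv_inv, abs_of_pos (by positivity), smul_eq_mul]

theorem eLpNorm'_comp_inv_smul_sub {ε : Type*} [TopologicalSpace ε] [ContinuousENorm ε]
    [MeasurableSpace ε] [OpensMeasurableSpace ε] {f : E → ε} (hf : Measurable f) {q : ℝ}
    (hq : 0 < q) {r : ℝ} (hr : 0 < r) (x₀ : E) :
    eLpNorm' (fun x => f (r⁻¹ • (x - x₀))) q μ =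
      ENNReal.ofReal (r ^ ((Module.finrank ℝ E : ℝ) / q)) * eLpNorm' f q μ := by
  rw [eLpNorm', eLpNorm', lintegral_comp_inv_smul_sub μ (hf.enorm.pow_const q) hr,
    ENNReal.mul_rpow_of_nonneg _ _ (by positivity), ENNReal.ofReal_rpow_of_pos (by positivity),
    ← Real.rpow_natCast, ← Real.rpow_mul hr.le, mul_one_div]

end HaarDilation

theorem eLpNorm'_const_mul_ennreal {α : Type*} [MeasurableSpace α] {μ : Measure α} {f : α → ℝ≥0∞}
    (hf : AEMeasurable f μ) (c : ℝ≥0∞) {q : ℝ} (hq : 0 < q) :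
    eLpNorm' (fun x => c * f x) q μ = c * eLpNorm' f q μ := by
  simp only [eLpNorm', enorm_eq_self]
  simp_rw [ENNReal.mul_rpow_of_nonneg _ _ hq.le]
  rw [lintegral_const_mul'' _ (hf.pow_const q), ENNReal.mul_rpow_of_nonneg _ _ (by positivity),
    ← ENNReal.rpow_mul, mul_one_div_cancel hq.ne', ENNReal.rpow_one]

theorem eLpNorm'_indicator_const {α ε : Type*} [MeasurableSpace α] {μ : Measure α}
    [TopologicalSpace ε] [ESeminormedAddMonoid ε] {s : Set α} (hs : MeasurableSet s) {q : ℝ}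
    (hq : 0 < q) (c : ε) : eLpNorm' (s.indicator fun _ => c) q μ = ‖c‖ₑ * μ s ^ (1 / q) := by
  have hq' : ENNReal.ofReal q ≠ 0 := (ENNReal.ofReal_pos.mpr hq).ne'
  have h := eLpNorm_indicator_const (μ := μ) (c := c) hs hq' ofReal_ne_top
  rwa [eLpNorm_eq_eLpNorm' hq' ofReal_ne_top, ENNReal.toReal_ofReal hq.le] at h

theorem measurable_eLpNorm'_section {α β F : Type*} [MeasurableSpace α] [MeasurableSpace β]
    [NormedAddCommGroup F] [MeasurableSpace F] [OpensMeasurableSpace F] {μ : Measure α} [SFinite μ]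
    {v : α × β → F} (hv : Measurable v) (q : ℝ) :
    Measurable fun y => eLpNorm' (fun x => v (x, y)) q μ :=
  ((hv.enorm.pow_const q).lintegral_prod_left').pow_const _

theorem ae_enorm_lt_top_of_eLpNorm'_ne_top {α ε : Type*} [MeasurableSpace α] {μ : Measure α}
    [TopologicalSpace ε] [ContinuousENorm ε] {f : α → ε} {q : ℝ} (hq : 0 < q)
    (hf : AEStronglyMeasurable f μ) (hfin : eLpNorm' f q μ ≠ ⊤) : ∀ᵐ x ∂μ, ‖f x‖ₑ < ⊤ := by
  rw [eLpNorm', Ne, ENNReal.rpow_eq_top_iff_of_pos (by positivity)] at hfin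
  filter_upwards [ae_lt_top' (hf.enorm.pow_const q) hfin] with x hx
  rwa [ENNReal.rpow_lt_top_iff_of_pos hq] at hx

theorem tendsto_eLpNorm'_zero_of_dominated {α ε : Type*} [MeasurableSpace α] {μ : Measure α}
    [TopologicalSpace ε] [ContinuousENorm ε] {F : ℕ → α → ε} {g : α → ε} {q : ℝ} (hq : 0 < q)
    (hF : ∀ k, AEStronglyMeasurable (F k) μ) (hFg : ∀ k x, ‖F k x‖ₑ ≤ ‖g x‖ₑ)
    (hg : eLpNorm' g q μ ≠ ⊤) (hlim : ∀ᵐ x ∂μ, Tendsto (fun k => ‖F k x‖ₑ) atTop (𝓝 0)) :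
    Tendsto (fun k => eLpNorm' (F k) q μ) atTop (𝓝 0) := by
  have hint : ∫⁻ x, ‖g x‖ₑ ^ q ∂μ ≠ ⊤ := by
    rwa [eLpNorm', Ne, ENNReal.rpow_eq_top_iff_of_pos (by positivity)] at hg
  have hlim' := tendsto_lintegral_of_dominated_convergence' _ (fun k => (hF k).enorm.pow_const q)
    (fun k => .of_forall fun x => ENNReal.rpow_le_rpow (hFg k x) hq.le) hint
    (hlim.mono fun x hx => by simpa [hq] using hx.ennrpow_const q)
  simpa [eLpNorm', hq] using hlim'.ennrpow_const (1 / q)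

theorem tendsto_zero_of_forall_le_add {x A : ℕ → ℝ≥0∞} {B : ℕ → ℕ → ℝ≥0∞}
    (hA : Tendsto A atTop (𝓝 0)) (hB : ∀ k, Tendsto (B k) atTop (𝓝 0))
    (h : ∀ k n, x n ≤ A k + B k n) : Tendsto x atTop (𝓝 0) := by
  rw [ENNReal.tendsto_nhds_zero] at hA ⊢
  intro ε hε
  obtain ⟨k, hk⟩ := (hA (ε / 2) (ENNReal.half_pos hε.ne')).exists
  filter_upwards [ENNReal.tendsto_nhds_zero.mp (hB k) (ε / 2) (ENNReal.half_pos hε.ne')] with n hn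
  calc x n ≤ A k + B k n := h k n
    _ ≤ ε / 2 + ε / 2 := add_le_add hk hn
    _ = ε := ENNReal.add_halves ε

theorem div_le_or_div_le_of_abs_le {l₁ l₂ s T : ℝ} (hl₁ : 0 < l₁) (hl₂ : 0 < l₂) (hT : 0 ≤ T)
    (hs : |s| ≤ (l₁ + l₂) * T) :
    l₁ / l₂ ≤ (2 + 2 * T) / (l₂ / l₁ + l₁ / l₂ + |s| / l₁) ∨
      l₂ / l₁ ≤ (2 + 2 * T) / (l₂ / l₁ + l₁ / l₂ + |s| / l₁) := by
  have hpos : 0 < l₂ / l₁ + l₁ / l₂ + |s| / l₁ := by positivity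
  rcases le_total l₁ l₂ with hle | hle
  · left
    rw [le_div_iff₀ hpos]
    have hexpand : l₁ / l₂ * (l₂ / l₁ + l₁ / l₂ + |s| / l₁) = 1 + (l₁ / l₂) ^ 2 + |s| / l₂ := by
      field_simp
    have hratio : l₁ / l₂ ≤ 1 := (div_le_one hl₂).mpr hle
    have hs' : |s| / l₂ ≤ 2 * T := by
      rw [div_le_iff₀ hl₂]; nlinarith
    rw [hexpand]; nlinarith [div_pos hl₁ hl₂]
  · right
    rw [le_div_iff₀ hpos]
    have hexpand : l₂ / l₁ * (l₂ / l₁ + l₁ / l₂ + |s| / l₁) =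
        (l₂ / l₁) ^ 2 + 1 + l₂ / l₁ * (|s| / l₁) := by
      field_simp
    have hratio : l₂ / l₁ ≤ 1 := (div_le_one hl₁).mpr hle
    have hs' : |s| / l₁ ≤ 2 * T := by
      rw [div_le_iff₀ hl₁]; nlinarith
    rw [hexpand]; nlinarith [div_pos hl₂ hl₁, div_nonneg (abs_nonneg s) hl₁.le]

local notation "ℝ³" => EuclideanSpace ℝ (Fin 3)

section MixedNorm

variable {a b : ℝ}

theorem mixedNorm_eq_eLpNorm' (v : ℝ³ × ℝ → ℝ) :
    mixedNorm a b v = eLpNorm' (fun t => eLpNorm' (fun x => v (x, t)) b volume) a volume := by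
  simp only [mixedNorm, eLpNorm', enorm_eq_self, Real.enorm_eq_ofReal_abs]
  congr 2 with t
  rw [← ENNReal.rpow_mul, one_div_mul_eq_div]

theorem mixedNorm_mono (ha : 0 ≤ a) (hb : 0 ≤ b) {u v : ℝ³ × ℝ → ℝ} (h : ∀ z, |u z| ≤ |v z|) :
    mixedNorm a b u ≤ mixedNorm a b v := by
  simp only [mixedNorm_eq_eLpNorm']
  exact eLpNorm'_mono_enorm_ae ha
    (.of_forall fun t => eLpNorm'_mono_ae hb (.of_forall fun x => h (x, t)))

theorem mixedNorm_add_le (ha : 1 ≤ a) (hb : 1 ≤ b) {u v : ℝ³ × ℝ → ℝ} (hu : Measurable u)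
    (hv : Measurable v) : mixedNorm a b (u + v) ≤ mixedNorm a b u + mixedNorm a b v := by
  simp only [mixedNorm_eq_eLpNorm']
  calc _ ≤ eLpNorm' ((fun t => eLpNorm' (fun x => u (x, t)) b volume) +
        fun t => eLpNorm' (fun x => v (x, t)) b volume) a volume := by
        refine eLpNorm'_mono_enorm_ae (by linarith) (.of_forall fun t => ?_)
        exact eLpNorm'_add_le (f := fun x => u (x, t)) (g := fun x => v (x, t))
          (hu.comp measurable_prodMk_right).aestronglyMeasurable
          (hv.comp measurable_prodMk_right).aestronglyMeasurable hb
    _ ≤ _ := eLpNorm'_add_le (measurable_eLpNorm'_section hu b).aestronglyMeasurable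
          (measurable_eLpNorm'_section hv b).aestronglyMeasurable ha

theorem mixedNorm_mul_le {a₁ a₂ b₁ b₂ : ℝ} (ha : 0 < a) (ha₁ : a < a₁) (hb : 0 < b) (hb₁ : b < b₁)
    (haa : 1 / a = 1 / a₁ + 1 / a₂) (hbb : 1 / b = 1 / b₁ + 1 / b₂) {u v : ℝ³ × ℝ → ℝ}
    (hu : Measurable u) (hv : Measurable v) :
    mixedNorm a b (u * v) ≤ mixedNorm a₁ b₁ u * mixedNorm a₂ b₂ v := by
  simp only [mixedNorm_eq_eLpNorm']
  calc _ ≤ eLpNorm' ((fun t => eLpNorm' (fun x => u (x, t)) b₁ volume) *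
        fun t => eLpNorm' (fun x => v (x, t)) b₂ volume) a volume := by
        refine eLpNorm'_mono_enorm_ae ha.le (.of_forall fun t => ?_)
        exact eLpNorm'_smul_le_mul_eLpNorm' (f := fun x => v (x, t)) (φ := fun x => u (x, t))
          (hv.comp measurable_prodMk_right).aestronglyMeasurable
          (hu.comp measurable_prodMk_right).aestronglyMeasurable hb hb₁ hbb
    _ ≤ _ := by
        simpa only [eLpNorm', enorm_eq_self] using ENNReal.lintegral_Lp_mul_le_Lq_mul_Lr ha ha₁ haa
          volume (measurable_eLpNorm'_section hu b₁).aemeasurable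
          (measurable_eLpNorm'_section hv b₂).aemeasurable

theorem mixedNorm_const_mul (ha : 0 < a) (hb : 0 < b) (c : ℝ) {v : ℝ³ × ℝ → ℝ}
    (hv : Measurable v) : mixedNorm a b (fun z => c * v z) = ‖c‖ₑ * mixedNorm a b v := by
  have hinner : ∀ t, eLpNorm' (fun x => c * v (x, t)) b volume =
      ‖c‖ₑ * eLpNorm' (fun x => v (x, t)) b volume :=
    fun t => eLpNorm'_const_smul (f := fun x => v (x, t)) c hb
  rw [mixedNorm_eq_eLpNorm', mixedNorm_eq_eLpNorm', funext hinner,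
    eLpNorm'_const_mul_ennreal (measurable_eLpNorm'_section hv b).aemeasurable _ ha]

theorem mixedNorm_zero (ha : 0 < a) (hb : 0 < b) : mixedNorm a b 0 = 0 := by
  simp [mixedNorm, ha, hb]

theorem mixedNorm_indicator_prod (ha : 0 < a) (hb : 0 < b) {A : Set ℝ³} {I : Set ℝ}
    (hA : MeasurableSet A) (hI : MeasurableSet I) (c : ℝ) :
    mixedNorm a b ((A ×ˢ I).indicator fun _ => c) =
      ‖c‖ₑ * volume A ^ (1 / b) * volume I ^ (1 / a) := by
  have hsec : ∀ t, eLpNorm' (fun x => (A ×ˢ I).indicator (fun _ => c) (x, t)) b volume =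
      I.indicator (fun _ => ‖c‖ₑ * volume A ^ (1 / b)) t := by
    intro t
    by_cases ht : t ∈ I
    · have : (fun x => (A ×ˢ I).indicator (fun _ => c) (x, t)) = A.indicator fun _ => c := by
        ext x
        by_cases hx : x ∈ A <;> simp [hx, ht]
      rw [this, eLpNorm'_indicator_const hA hb, indicator_of_mem ht]
    · have : (fun x => (A ×ˢ I).indicator (fun _ => c) (x, t)) = 0 := by
        ext x
        simp [ht]
      rw [this, eLpNorm'_zero hb, indicator_of_notMem ht]
  rw [mixedNorm_eq_eLpNorm', funext hsec, eLpNorm'_indicator_const hI ha, enorm_eq_self]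

theorem tendsto_mixedNorm_zero_of_dominated (ha : 0 < a) (hb : 0 < b) {F : ℕ → ℝ³ × ℝ → ℝ}
    {U : ℝ³ × ℝ → ℝ} (hF : ∀ k, Measurable (F k)) (hU : Measurable U)
    (hFU : ∀ k z, |F k z| ≤ |U z|) (hUfin : mixedNorm a b U ≠ ⊤)
    (hlim : ∀ z, Tendsto (fun k => F k z) atTop (𝓝 0)) :
    Tendsto (fun k => mixedNorm a b (F k)) atTop (𝓝 0) := by
  simp only [mixedNorm_eq_eLpNorm'] at hUfin ⊢
  have hsec_fin := ae_enorm_lt_top_of_eLpNorm'_ne_top ha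
    (measurable_eLpNorm'_section hU b).aestronglyMeasurable hUfin
  refine tendsto_eLpNorm'_zero_of_dominated ha
    (fun k => (measurable_eLpNorm'_section (hF k) b).aestronglyMeasurable) (fun k t => ?_) hUfin
    (hsec_fin.mono fun t ht => ?_)
  · exact eLpNorm'_mono_ae hb.le (.of_forall fun x => hFU k (x, t))
  · simp only [enorm_eq_self]
    refine tendsto_eLpNorm'_zero_of_dominated hb
      (fun k => ((hF k).comp measurable_prodMk_right).aestronglyMeasurable) (fun k x => ?_) ht.ne
      (.of_forall fun x => ?_)
    · simpa only [Real.enorm_eq_ofReal_abs] using ENNReal.ofReal_le_ofReal (hFU k (x, t))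
    · simpa using (hlim (x, t)).enorm

noncomputable def rescale (α r t₀ : ℝ) (U : ℝ³ × ℝ → ℝ) (z : ℝ³ × ℝ) : ℝ :=
  r ^ (-α) * U (r⁻¹ • z.1, (z.2 - t₀) / r)

theorem rescale_add (α r t₀ : ℝ) (U V : ℝ³ × ℝ → ℝ) :
    rescale α r t₀ (U + V) = rescale α r t₀ U + rescale α r t₀ V := by
  ext z
  simp only [rescale, Pi.add_apply, mul_add]

theorem measurable_rescale (α r t₀ : ℝ) {U : ℝ³ × ℝ → ℝ} (hU : Measurable U) :
    Measurable (rescale α r t₀ U) :=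
  (hU.comp (((measurable_const_smul _).comp measurable_fst).prodMk
    ((measurable_snd.sub measurable_const).div_const _))).const_mul _

theorem mixedNorm_rescale (ha : 0 < a) (hb : 0 < b) (α : ℝ) {r : ℝ} (hr : 0 < r) (t₀ : ℝ)
    {U : ℝ³ × ℝ → ℝ} (hU : Measurable U) :
    mixedNorm a b (rescale α r t₀ U) =
      ENNReal.ofReal (r ^ (3 / b + 1 / a - α)) * mixedNorm a b U := by
  have hinner : ∀ t, eLpNorm' (fun x => rescale α r t₀ U (x, t)) b volume =
      ENNReal.ofReal (r ^ (-α) * r ^ (3 / b)) *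
        eLpNorm' (fun x => U (x, r⁻¹ • (t - t₀))) b volume := by
    intro t
    have hdil := eLpNorm'_comp_inv_smul_sub volume (f := fun x : ℝ³ => U (x, r⁻¹ • (t - t₀)))
      (hU.comp measurable_prodMk_right) hb hr 0
    simp only [sub_zero, finrank_euclideanSpace_fin, Nat.cast_ofNat] at hdil
    have hsmul : (fun x => rescale α r t₀ U (x, t)) =
        r ^ (-α) • fun x : ℝ³ => U (r⁻¹ • x, r⁻¹ • (t - t₀)) := by
      ext x
      simp only [rescale, Pi.smul_apply, smul_eq_mul, div_eq_inv_mul]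
    rw [hsmul, eLpNorm'_const_smul _ hb, hdil, Real.enorm_of_nonneg (by positivity),
      ENNReal.ofReal_mul (by positivity), mul_assoc]
  have hsec := measurable_eLpNorm'_section (μ := volume) hU b
  have hdil := eLpNorm'_comp_inv_smul_sub volume hsec ha hr t₀
  simp only [Module.finrank_self, Nat.cast_one] at hdil
  rw [mixedNorm_eq_eLpNorm', mixedNorm_eq_eLpNorm', funext hinner,
    eLpNorm'_const_mul_ennreal (f := fun t => eLpNorm' (fun x => U (x, r⁻¹ • (t - t₀))) b volume)
      (hsec.comp (by fun_prop)).aemeasurable _ ha, hdil, ← mul_assoc,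
    ← ENNReal.ofReal_mul (by positivity), ← Real.rpow_add hr, ← Real.rpow_add hr]
  ring_nf

theorem mixedNorm_rescale_mul_rescale_le (ha : 0 < a) (hb : 0 < b) {α : ℝ}
    (hα : 3 / b + 1 / a = 2 * α) {r₁ r₂ : ℝ} (hr₁ : 0 < r₁) (hr₂ : 0 < r₂) (t₁ t₂ : ℝ)
    {f g : ℝ³ × ℝ → ℝ} (hf : Measurable f) (hg : Measurable g) :
    mixedNorm a b (rescale α r₁ t₁ f * rescale α r₂ t₂ g) ≤
      mixedNorm (2 * a) (2 * b) f * mixedNorm (2 * a) (2 * b) g := by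
  have h2a : 0 < 2 * a := by positivity
  have h2b : 0 < 2 * b := by positivity
  have hcrit : 3 / (2 * b) + 1 / (2 * a) - α = 0 := by
    rw [← mul_div_mul_left 3 b two_ne_zero] at hα
    field_simp at hα ⊢
    linarith
  calc _ ≤ mixedNorm (2 * a) (2 * b) (rescale α r₁ t₁ f) *
        mixedNorm (2 * a) (2 * b) (rescale α r₂ t₂ g) :=
        mixedNorm_mul_le ha (by linarith) hb (by linarith) (by field_simp; ring)
          (by field_simp; ring) (measurable_rescale α r₁ t₁ hf) (measurable_rescale α r₂ t₂ hg)
    _ = _ := by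
        simp only [mixedNorm_rescale h2a h2b α hr₁ t₁ hf, mixedNorm_rescale h2a h2b α hr₂ t₂ hg,
          hcrit, Real.rpow_zero, ENNReal.ofReal_one, one_mul]

theorem mixedNorm_rescale_mul_rescale_le_add (ha : 1 ≤ a) (hb : 1 ≤ b) {α : ℝ}
    (hα : 3 / b + 1 / a = 2 * α) {r₁ r₂ : ℝ} (hr₁ : 0 < r₁) (hr₂ : 0 < r₂) (t₁ t₂ : ℝ)
    {U₁ U₂ : ℝ³ × ℝ → ℝ} (hU₁ : Measurable U₁) (hU₂ : Measurable U₂) {s₁ s₂ : Set (ℝ³ × ℝ)}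
    (hs₁ : MeasurableSet s₁) (hs₂ : MeasurableSet s₂) :
    mixedNorm a b (rescale α r₁ t₁ U₁ * rescale α r₂ t₂ U₂) ≤
      mixedNorm (2 * a) (2 * b) (s₁ᶜ.indicator U₁) * mixedNorm (2 * a) (2 * b) U₂ +
        mixedNorm (2 * a) (2 * b) U₁ * mixedNorm (2 * a) (2 * b) (s₂ᶜ.indicator U₂) +
          mixedNorm a b
            (rescale α r₁ t₁ (s₁.indicator U₁) * rescale α r₂ t₂ (s₂.indicator U₂)) := by
  have ha₀ : 0 < a := by linarith
  have hb₀ : 0 < b := by linarith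
  have hT₁ := hU₁.indicator hs₁
  have hT₂ := hU₂.indicator hs₂
  have hR₁ := hU₁.indicator hs₁.compl
  have hR₂ := hU₂.indicator hs₂.compl
  have hsplit : rescale α r₁ t₁ U₁ * rescale α r₂ t₂ U₂ =
      rescale α r₁ t₁ (s₁ᶜ.indicator U₁) * rescale α r₂ t₂ U₂ +
        rescale α r₁ t₁ (s₁.indicator U₁) * rescale α r₂ t₂ (s₂ᶜ.indicator U₂) +
          rescale α r₁ t₁ (s₁.indicator U₁) * rescale α r₂ t₂ (s₂.indicator U₂) := by
    have e₁ := congrArg (rescale α r₁ t₁) (indicator_self_add_compl s₁ U₁)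
    have e₂ := congrArg (rescale α r₂ t₂) (indicator_self_add_compl s₂ U₂)
    rw [rescale_add] at e₁ e₂
    rw [← e₁, ← e₂]
    ring
  have hmeas := fun {f g : ℝ³ × ℝ → ℝ} (hf : Measurable f) (hg : Measurable g) =>
    (measurable_rescale α r₁ t₁ hf).mul (measurable_rescale α r₂ t₂ hg)
  rw [hsplit]
  refine (mixedNorm_add_le ha hb ((hmeas hR₁ hU₂).add (hmeas hT₁ hR₂)) (hmeas hT₁ hT₂)).trans ?_
  gcongr
  refine (mixedNorm_add_le ha hb (hmeas hR₁ hU₂) (hmeas hT₁ hR₂)).trans ?_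
  gcongr
  · exact mixedNorm_rescale_mul_rescale_le ha₀ hb₀ hα hr₁ hr₂ t₁ t₂ hR₁ hU₂
  · refine (mixedNorm_rescale_mul_rescale_le ha₀ hb₀ hα hr₁ hr₂ t₁ t₂ hT₁ hR₂).trans ?_
    gcongr
    exact mixedNorm_mono (by positivity) (by positivity) fun z => by
      by_cases hz : z ∈ s₁ <;> simp [hz]

theorem rescale_mul_rescale_eq_zero {α r₁ r₂ t₁ t₂ k : ℝ} (hr₁ : 0 < r₁) (hr₂ : 0 < r₂)
    {f g : ℝ³ × ℝ → ℝ} (hf : ∀ z, f z ≠ 0 → |z.2| ≤ k) (hg : ∀ z, g z ≠ 0 → |z.2| ≤ k)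
    (hfar : (r₁ + r₂) * k < |t₁ - t₂|) : rescale α r₁ t₁ f * rescale α r₂ t₂ g = 0 := by
  ext z
  by_contra h
  obtain ⟨h₁, h₂⟩ := mul_ne_zero_iff.mp h
  have e₁ := hf _ (right_ne_zero_of_mul h₁)
  have e₂ := hg _ (right_ne_zero_of_mul h₂)
  rw [abs_div, abs_of_pos hr₁, div_le_iff₀ hr₁] at e₁
  rw [abs_div, abs_of_pos hr₂, div_le_iff₀ hr₂] at e₂
  have := abs_sub_le t₁ z.2 t₂
  rw [abs_sub_comm t₁ z.2] at this
  nlinarith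

theorem mixedNorm_rescale_mul_rescale_le_of_abs_le (ha : 0 < a) (hb : 0 < b) {α : ℝ}
    (hα : 3 / b + 1 / a = 2 * α) {r₁ r₂ : ℝ} (hr₁ : 0 < r₁) (hr₂ : 0 < r₂) (t₁ t₂ : ℝ)
    {f g : ℝ³ × ℝ → ℝ} (hf : Measurable f) {k : ℝ} (hg : ∀ z, |g z| ≤ k) :
    mixedNorm a b (rescale α r₁ t₁ f * rescale α r₂ t₂ g) ≤
      ENNReal.ofReal ((r₁ / r₂) ^ α * k) * mixedNorm a b f := by
  have hk : 0 ≤ k := (abs_nonneg _).trans (hg 0)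
  calc _ ≤ mixedNorm a b (fun z => (r₂ ^ (-α) * k) * rescale α r₁ t₁ f z) := by
        refine mixedNorm_mono ha.le hb.le fun z => ?_
        have hr₂α := Real.rpow_pos_of_pos hr₂ (-α)
        rw [Pi.mul_apply, abs_mul, abs_mul, abs_of_nonneg (by positivity : 0 ≤ r₂ ^ (-α) * k),
          mul_comm (r₂ ^ (-α) * k)]
        gcongr
        rw [rescale, abs_mul, abs_of_pos hr₂α]
        gcongr
        exact hg _
    _ = _ := by
        rw [mixedNorm_const_mul ha hb _ (measurable_rescale α r₁ t₁ hf),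
          mixedNorm_rescale ha hb α hr₁ t₁ hf, hα, Real.enorm_of_nonneg (by positivity),
          ← mul_assoc, ← ENNReal.ofReal_mul (by positivity)]
        congr 2
        rw [Real.div_rpow hr₁.le hr₂.le, Real.rpow_neg hr₂.le]
        ring_nf

theorem mixedNorm_rescale_mul_rescale_le_div_orthogonality (ha : 0 < a) (hb : 0 < b) {α : ℝ}
    (hα₀ : 0 ≤ α) (hα : 3 / b + 1 / a = 2 * α) {f g : ℝ³ × ℝ → ℝ} (hf : Measurable f)
    (hg : Measurable g) {k : ℝ} (hfk : ∀ z, |f z| ≤ k) (hgk : ∀ z, |g z| ≤ k)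
    (hf_supp : ∀ z, f z ≠ 0 → |z.2| ≤ k) (hg_supp : ∀ z, g z ≠ 0 → |z.2| ≤ k)
    {r₁ r₂ t₁ t₂ : ℝ} (hr₁ : 0 < r₁) (hr₂ : 0 < r₂) :
    mixedNorm a b (rescale α r₁ t₁ f * rescale α r₂ t₂ g) ≤
      ENNReal.ofReal (((2 + 2 * k) / (r₂ / r₁ + r₁ / r₂ + |t₁ - t₂| / r₁)) ^ α) *
        (ENNReal.ofReal k * (mixedNorm a b f + mixedNorm a b g)) := by
  have hk : 0 ≤ k := (abs_nonneg _).trans (hfk 0)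
  by_cases hfar : (r₁ + r₂) * k < |t₁ - t₂|
  · rw [rescale_mul_rescale_eq_zero hr₁ hr₂ hf_supp hg_supp hfar, mixedNorm_zero ha hb]
    exact zero_le
  rw [mul_add, mul_add, ← mul_assoc, ← mul_assoc, ← ENNReal.ofReal_mul (by positivity)]
  rcases div_le_or_div_le_of_abs_le hr₁ hr₂ hk (not_lt.mp hfar) with hq | hq
  · refine (mixedNorm_rescale_mul_rescale_le_of_abs_le ha hb hα hr₁ hr₂ _ _ hf hgk).trans
      (le_trans ?_ le_self_add)
    gcongr
  · rw [mul_comm]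
    refine (mixedNorm_rescale_mul_rescale_le_of_abs_le ha hb hα hr₂ hr₁ _ _ hg hfk).trans
      (le_trans ?_ le_add_self)
    gcongr

theorem tendsto_mixedNorm_rescale_mul_rescale_of_orthogonal (ha : 0 < a) (hb : 0 < b) {α : ℝ}
    (hα₀ : 0 < α) (hα : 3 / b + 1 / a = 2 * α) {f g : ℝ³ × ℝ → ℝ} (hf : Measurable f)
    (hg : Measurable g) {k : ℝ} (hfk : ∀ z, |f z| ≤ k) (hgk : ∀ z, |g z| ≤ k)
    (hf_supp : ∀ z, f z ≠ 0 → |z.2| ≤ k) (hg_supp : ∀ z, g z ≠ 0 → |z.2| ≤ k)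
    (hf_fin : mixedNorm a b f ≠ ⊤) (hg_fin : mixedNorm a b g ≠ ⊤)
    {lam₁ lam₂ t₁ t₂ : ℕ → ℝ} (hlam₁ : ∀ n, 0 < lam₁ n) (hlam₂ : ∀ n, 0 < lam₂ n)
    (horth : Tendsto (fun n => lam₂ n / lam₁ n + lam₁ n / lam₂ n + |t₁ n - t₂ n| / lam₁ n)
      atTop atTop) :
    Tendsto (fun n => mixedNorm a b
      (rescale α (lam₁ n) (t₁ n) f * rescale α (lam₂ n) (t₂ n) g)) atTop (𝓝 0) := by
  have hratio := (tendsto_const_nhds (x := 2 + 2 * k)).div_atTop horth |>.rpow_const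
    (Or.inr hα₀.le)
  rw [Real.zero_rpow hα₀.ne'] at hratio
  refine tendsto_of_tendsto_of_tendsto_of_le_of_le tendsto_const_nhds ?_ (fun _ => zero_le)
    fun n => mixedNorm_rescale_mul_rescale_le_div_orthogonality ha hb hα₀.le hα hf hg hfk hgk
      hf_supp hg_supp (hlam₁ n) (hlam₂ n)
  simpa using ENNReal.Tendsto.mul_const (ENNReal.tendsto_ofReal hratio) (Or.inr (by finiteness))

def truncSet (U : ℝ³ × ℝ → ℝ) (k : ℝ) : Set (ℝ³ × ℝ) :=
  {z | |U z| ≤ k ∧ ‖z.1‖ ≤ k ∧ |z.2| ≤ k}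

theorem measurableSet_truncSet {U : ℝ³ × ℝ → ℝ} (hU : Measurable U) (k : ℝ) :
    MeasurableSet (truncSet U k) :=
  (measurableSet_le hU.abs measurable_const).inter
    ((measurableSet_le measurable_fst.norm measurable_const).inter
      (measurableSet_le measurable_snd.abs measurable_const))

theorem abs_indicator_truncSet_le {U : ℝ³ × ℝ → ℝ} {k : ℝ} (hk : 0 ≤ k) (z : ℝ³ × ℝ) :
    |(truncSet U k).indicator U z| ≤ k := by
  by_cases hz : z ∈ truncSet U k
  · rw [indicator_of_mem hz]
    exact hz.1
  · rwa [indicator_of_notMem hz, abs_zero]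

theorem abs_snd_le_of_indicator_truncSet_ne_zero {U : ℝ³ × ℝ → ℝ} {k : ℝ} {z : ℝ³ × ℝ}
    (hz : (truncSet U k).indicator U z ≠ 0) : |z.2| ≤ k :=
  (mem_of_indicator_ne_zero hz).2.2

theorem abs_indicator_truncSet_le_indicator (U : ℝ³ × ℝ → ℝ) (k : ℝ) (z : ℝ³ × ℝ) :
    |(truncSet U k).indicator U z| ≤
      (Metric.closedBall (0 : ℝ³) k ×ˢ Icc (-k) k).indicator (fun _ => k) z := by
  by_cases hz : z ∈ truncSet U k
  · rw [indicator_of_mem hz, indicator_of_mem]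
    · exact hz.1
    · exact ⟨mem_closedBall_zero_iff.mpr hz.2.1, abs_le.mp hz.2.2⟩
  · rw [indicator_of_notMem hz, abs_zero]
    by_cases hbox : z ∈ Metric.closedBall (0 : ℝ³) k ×ˢ Icc (-k) k
    · rw [indicator_of_mem hbox]
      exact (norm_nonneg _).trans (mem_closedBall_zero_iff.mp hbox.1)
    · rw [indicator_of_notMem hbox]

theorem mixedNorm_indicator_truncSet_ne_top (ha : 0 < a) (hb : 0 < b) (U : ℝ³ × ℝ → ℝ) (k : ℝ) :
    mixedNorm a b ((truncSet U k).indicator U) ≠ ⊤ := by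
  refine ne_top_of_le_ne_top ?_ (mixedNorm_mono ha.le hb.le fun z =>
    (abs_indicator_truncSet_le_indicator U k z).trans (le_abs_self _))
  rw [mixedNorm_indicator_prod ha hb Metric.isClosed_closedBall.measurableSet measurableSet_Icc]
  exact ENNReal.mul_ne_top (ENNReal.mul_ne_top enorm_ne_top
    (ENNReal.rpow_ne_top_of_nonneg (by positivity) measure_closedBall_lt_top.ne))
    (ENNReal.rpow_ne_top_of_nonneg (by positivity) (by simp))

theorem tendsto_indicator_compl_truncSet (U : ℝ³ × ℝ → ℝ) (z : ℝ³ × ℝ) :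
    Tendsto (fun k : ℕ => (truncSet U k)ᶜ.indicator U z) atTop (𝓝 0) := by
  refine tendsto_const_nhds.congr' ?_
  filter_upwards [tendsto_natCast_atTop_atTop.eventually_ge_atTop (max |U z| (max ‖z.1‖ |z.2|))]
    with k hk
  have hz : z ∈ truncSet U k := ⟨(le_max_left _ _).trans hk,
    (le_max_left _ _).trans ((le_max_right _ _).trans hk),
    (le_max_right _ _).trans ((le_max_right _ _).trans hk)⟩
  rw [indicator_of_notMem (not_not.mpr hz)]

theorem tendsto_mixedNorm_indicator_compl_truncSet (ha : 0 < a) (hb : 0 < b)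
    {U : ℝ³ × ℝ → ℝ} (hU : Measurable U) (hfin : mixedNorm a b U ≠ ⊤) :
    Tendsto (fun k : ℕ => mixedNorm a b ((truncSet U k)ᶜ.indicator U)) atTop (𝓝 0) :=
  tendsto_mixedNorm_zero_of_dominated ha hb
    (fun k => hU.indicator (measurableSet_truncSet hU k).compl) hU
    (fun k z => by by_cases hz : z ∈ truncSet U k <;> simp [hz])
    hfin (tendsto_indicator_compl_truncSet U)

end MixedNorm

theorem exponents_of_three_lt {p sp : ℝ} (hp : 3 < p) (hsp : sp = 3 / 2 - 2 / (p - 1)) :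
    1 ≤ p / (1 + sp) ∧ 1 ≤ p / (2 - sp) ∧ 0 < 3 / 2 - sp ∧
      3 / (p / (2 - sp)) + 1 / (p / (1 + sp)) = 2 * (3 / 2 - sp) := by
  have hsp₀ : 1 / 2 < sp := by
    have : 2 / (p - 1) < 1 := (div_lt_one (by linarith)).mpr (by linarith)
    linarith
  have hsp₁ : sp < 3 / 2 := by
    have : 0 < 2 / (p - 1) := div_pos two_pos (by linarith)
    linarith
  refine ⟨by rw [le_div_iff₀ (by linarith)]; linarith, by rw [le_div_iff₀ (by linarith)]; linarith,
    by linarith, ?_⟩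
  have hp1 : p - 1 ≠ 0 := by linarith
  rw [div_div_eq_mul_div, one_div_div, ← add_div, div_eq_iff (by linarith), hsp]
  field_simp
  ring

theorem product_of_profiles_vanishes_general (p sp : ℝ) (hp : 3 < p)
    (hsp : sp = 3 / 2 - 2 / (p - 1))
    (U₁ U₂ : EuclideanSpace ℝ (Fin 3) × ℝ → ℝ)
    (hU₁m : Measurable U₁) (hU₂m : Measurable U₂)
    (hU₁ : mixedNorm (2 * p / (1 + sp)) (2 * p / (2 - sp)) U₁ < ⊤)
    (hU₂ : mixedNorm (2 * p / (1 + sp)) (2 * p / (2 - sp)) U₂ < ⊤)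
    (lam₁ lam₂ t₁ t₂ : ℕ → ℝ)
    (hlam₁ : ∀ n, 0 < lam₁ n) (hlam₂ : ∀ n, 0 < lam₂ n)
    (horth : Tendsto
      (fun n => lam₂ n / lam₁ n + lam₁ n / lam₂ n + |t₁ n - t₂ n| / lam₁ n)
      atTop atTop) :
    Tendsto (fun n => mixedNorm (p / (1 + sp)) (p / (2 - sp))
      (fun z =>
        ((lam₁ n) ^ (-(3 / 2 - sp)) *
            U₁ ((lam₁ n)⁻¹ • z.1, (z.2 - t₁ n) / lam₁ n)) *
        ((lam₂ n) ^ (-(3 / 2 - sp)) *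
            U₂ ((lam₂ n)⁻¹ • z.1, (z.2 - t₂ n) / lam₂ n))))
      atTop (nhds 0) := by
  obtain ⟨ha, hb, hα, hab⟩ := exponents_of_three_lt hp hsp
  set a := p / (1 + sp)
  set b := p / (2 - sp)
  have ha₀ : 0 < a := by linarith
  have hb₀ : 0 < b := by linarith
  rw [show 2 * p / (1 + sp) = 2 * a by ring, show 2 * p / (2 - sp) = 2 * b by ring] at hU₁ hU₂
  change Tendsto (fun n => mixedNorm a b (rescale (3 / 2 - sp) (lam₁ n) (t₁ n) U₁ *
    rescale (3 / 2 - sp) (lam₂ n) (t₂ n) U₂)) atTop (𝓝 0)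
  refine tendsto_zero_of_forall_le_add ?_ (fun k => ?_) (fun k n =>
    mixedNorm_rescale_mul_rescale_le_add ha hb hab (hlam₁ n) (hlam₂ n) _ _ hU₁m hU₂m
      (measurableSet_truncSet hU₁m k) (measurableSet_truncSet hU₂m k))
  · have hR₁ := tendsto_mixedNorm_indicator_compl_truncSet (by positivity) (by positivity)
      hU₁m hU₁.ne
    have hR₂ := tendsto_mixedNorm_indicator_compl_truncSet (by positivity) (by positivity)
      hU₂m hU₂.ne
    simpa using (ENNReal.Tendsto.mul_const hR₁ (Or.inr hU₂.ne)).add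
      (ENNReal.Tendsto.const_mul hR₂ (Or.inr hU₁.ne))
  · exact tendsto_mixedNorm_rescale_mul_rescale_of_orthogonal ha₀ hb₀ hα hab
      (hU₁m.indicator (measurableSet_truncSet hU₁m k))
      (hU₂m.indicator (measurableSet_truncSet hU₂m k))
      (abs_indicator_truncSet_le k.cast_nonneg) (abs_indicator_truncSet_le k.cast_nonneg)
      (fun _ => abs_snd_le_of_indicator_truncSet_ne_zero)
      (fun _ => abs_snd_le_of_indicator_truncSet_ne_zero)
      (mixedNorm_indicator_truncSet_ne_top ha₀ hb₀ _ _)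
      (mixedNorm_indicator_truncSet_ne_top ha₀ hb₀ _ _) hlam₁ hlam₂ horth

/-- decoupling of almost orthogonal rescaled profiles.  If two
profiles have finite `L^{2p/(1+s_p)}_t L^{2p/(2-s_p)}_x` norm and the parameter
sequences are almost orthogonal, then the mixed
`L^{p/(1+s_p)}_t L^{p/(2-s_p)}_x` norm of the product of their rescalings
tends to `0`. -/
theorem product_of_profiles_vanishes (p sp : ℝ) (hp : 3 < p) (hp5 : p < 5)
    (hsp : sp = 3 / 2 - 2 / (p - 1))
    (U₁ U₂ : EuclideanSpace ℝ (Fin 3) × ℝ → ℝ)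
    (hU₁m : Measurable U₁) (hU₂m : Measurable U₂)
    (hU₁ : mixedNorm (2 * p / (1 + sp)) (2 * p / (2 - sp)) U₁ < ⊤)
    (hU₂ : mixedNorm (2 * p / (1 + sp)) (2 * p / (2 - sp)) U₂ < ⊤)
    (lam₁ lam₂ t₁ t₂ : ℕ → ℝ)
    (hlam₁ : ∀ n, 0 < lam₁ n) (hlam₂ : ∀ n, 0 < lam₂ n)
    (horth : Tendsto
      (fun n => lam₂ n / lam₁ n + lam₁ n / lam₂ n + |t₁ n - t₂ n| / lam₁ n)
      atTop atTop) :
    Tendsto (fun n => mixedNorm (p / (1 + sp)) (p / (2 - sp))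
      (fun z =>
        ((lam₁ n) ^ (-(3 / 2 - sp)) *
            U₁ ((lam₁ n)⁻¹ • z.1, (z.2 - t₁ n) / lam₁ n)) *
        ((lam₂ n) ^ (-(3 / 2 - sp)) *
            U₂ ((lam₂ n)⁻¹ • z.1, (z.2 - t₂ n) / lam₂ n))))
      atTop (nhds 0) :=
  product_of_profiles_vanishes_general p sp hp hsp U₁ U₂ hU₁m hU₂m hU₁ hU₂ lam₁ lam₂ t₁ t₂ hlam₁
    hlam₂ horth
end

section
/- Let θ ∈ (0,1), C > 0, m > 0, α ≥ 0 and r₀ > 0. Suppose f : (0,∞) → [0,∞) is non-increasing, f(r) → 0 as r → ∞, and f(r) ≤ ( θ + C·f(r/2)^m·r^{−α} )·f(r/2) for all r ≥ r₀. Then there exist R ≥ r₀, C' > 0 and δ > 0 (one may take δ = log₂(2/(1+θ))) such that f(r) ≤ C'·r^{−δ} for all r ≥ R. -/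
open Set Filter

/-- abstract decay-bootstrap iteration lemma.  If `f` is
non-increasing on `(0,∞)`, tends to `0` at infinity, and satisfies
`f(r) ≤ (θ + C f(r/2)^m r^{-α}) f(r/2)` for `r ≥ r₀`, with `θ ∈ (0,1)`,
then `f(r) ≤ C' r^{-δ}` for large `r`, with `δ = log₂(2/(1+θ)) > 0`. -/
theorem iteration_decay_lemma (θ C m α r₀ : ℝ) (hθ : θ ∈ Ioo (0 : ℝ) 1)
    (hC : 0 < C) (hm : 0 < m) (hα : 0 ≤ α) (hr₀ : 0 < r₀)
    (f : ℝ → ℝ) (hf0 : ∀ r : ℝ, 0 < r → 0 ≤ f r)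
    (hmono : ∀ r s : ℝ, 0 < r → r ≤ s → f s ≤ f r)
    (hlim : Tendsto f atTop (nhds 0))
    (hrec : ∀ r : ℝ, r₀ ≤ r → f r ≤ (θ + C * f (r / 2) ^ m * r ^ (-α)) * f (r / 2)) :
    0 < Real.logb 2 (2 / (1 + θ)) ∧
    ∃ R : ℝ, r₀ ≤ R ∧ ∃ C' > (0 : ℝ), ∀ r : ℝ, R ≤ r →
      f r ≤ C' * r ^ (-(Real.logb 2 (2 / (1 + θ)))) := by
  obtain ⟨hθ0, hθ1⟩ := hθ
  set δ := Real.logb 2 (2 / (1 + θ)) with hδdef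
  have h1θ : (0:ℝ) < 1 + θ := by linarith
  have hδpos : 0 < δ := by
    apply Real.logb_pos (by norm_num)
    rw [lt_div_iff₀ h1θ]; linarith
  refine ⟨hδpos, ?_⟩
  set θ' := (1 + θ) / 2 with hθ'def
  have hθ'0 : 0 < θ' := by positivity
  have hθ'1 : θ' < 1 := by rw [hθ'def]; linarith
  have hlogθ' : Real.logb 2 θ' = -δ := by
    rw [hθ'def, hδdef, Real.logb_div (by norm_num) (ne_of_gt h1θ),
      Real.logb_div (ne_of_gt h1θ) (by norm_num)]
    ring
  -- choose ε
  set ε := ((1 - θ) / (2 * C)) ^ (1/m : ℝ) with hεdef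
  have h1mθ : (0:ℝ) < (1 - θ) / (2 * C) := div_pos (by linarith) (by positivity)
  have hεpos : 0 < ε := Real.rpow_pos_of_pos h1mθ _
  have hεm : ε ^ m = (1 - θ) / (2 * C) := by
    rw [hεdef, one_div, Real.rpow_inv_rpow h1mθ.le (ne_of_gt hm)]
  obtain ⟨R₁, hR₁⟩ := (eventually_atTop.mp (hlim.eventually_lt_const hεpos))
  set R := max (max r₀ 1) (2 * R₁) with hRdef
  have hRr₀ : r₀ ≤ R := le_trans (le_max_left _ _) (le_max_left _ _)
  have hR1 : (1:ℝ) ≤ R := le_trans (le_max_right _ _) (le_max_left _ _)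
  have hR0 : (0:ℝ) < R := lt_of_lt_of_le one_pos hR1
  -- key step
  have key : ∀ r : ℝ, R ≤ r → f r ≤ θ' * f (r / 2) := by
    intro r hr
    have hr1 : (1:ℝ) ≤ r := le_trans hR1 hr
    have hr0 : (0:ℝ) < r := lt_of_lt_of_le one_pos hr1
    have hr2 : (0:ℝ) < r / 2 := by linarith
    have hfε : f (r / 2) < ε := by
      apply hR₁
      have : 2 * R₁ ≤ r := le_trans (le_max_right _ _) hr
      linarith
    have h1 : f (r / 2) ^ m ≤ ε ^ m :=
      Real.rpow_le_rpow (hf0 _ hr2) hfε.le hm.le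
    have h2 : r ^ (-α : ℝ) ≤ 1 :=
      Real.rpow_le_one_of_one_le_of_nonpos hr1 (by linarith)
    have h3 : C * f (r / 2) ^ m * r ^ (-α : ℝ) ≤ (1 - θ) / 2 := by
      have : C * f (r / 2) ^ m * r ^ (-α : ℝ) ≤ C * ε ^ m * 1 := by
        apply mul_le_mul _ h2 (Real.rpow_nonneg hr0.le _) (by positivity)
        exact mul_le_mul_of_nonneg_left h1 hC.le
      rw [mul_one, hεm] at this
      calc C * f (r / 2) ^ m * r ^ (-α : ℝ) ≤ C * ((1 - θ) / (2 * C)) := this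
        _ = (1 - θ) / 2 := by field_simp
    calc f r ≤ (θ + C * f (r / 2) ^ m * r ^ (-α)) * f (r / 2) :=
          hrec r (le_trans hRr₀ hr)
      _ ≤ θ' * f (r / 2) := by
          apply mul_le_mul_of_nonneg_right _ (hf0 _ hr2)
          rw [hθ'def]; linarith
  -- iteration
  have iter : ∀ n : ℕ, ∀ r : ℝ, R * 2 ^ n ≤ r → f r ≤ θ' ^ n * f (r / 2 ^ n) := by
    intro n
    induction n with
    | zero => intro r hr; simp
    | succ n ih =>
      intro r hr
      have h2n : (0:ℝ) < 2 ^ n := by positivity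
      have hrR : R ≤ r := by
        have : R * 1 ≤ R * 2 ^ (n+1) := by
          apply mul_le_mul_of_nonneg_left _ hR0.le
          exact one_le_pow₀ (by norm_num)
        simpa using le_trans this hr
      have hr2 : R * 2 ^ n ≤ r / 2 := by
        rw [le_div_iff₀ (by norm_num : (0:ℝ) < 2)]
        calc R * 2 ^ n * 2 = R * 2 ^ (n+1) := by ring
          _ ≤ r := hr
      have h1 := key r hrR
      have h2 := ih (r / 2) hr2
      have heq : r / 2 / 2 ^ n = r / 2 ^ (n + 1) := by
        rw [div_div, ← pow_succ']
      calc f r ≤ θ' * f (r / 2) := h1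
        _ ≤ θ' * (θ' ^ n * f (r / 2 / 2 ^ n)) :=
            mul_le_mul_of_nonneg_left h2 hθ'0.le
        _ = θ' ^ (n + 1) * f (r / 2 ^ (n + 1)) := by rw [heq]; ring
  -- conclude
  have hC'pos : (0:ℝ) < f R * R ^ (δ:ℝ) / θ' + 1 := by
    have hA : 0 ≤ f R * R ^ (δ:ℝ) / θ' :=
      div_nonneg (mul_nonneg (hf0 R hR0) (Real.rpow_nonneg hR0.le _)) hθ'0.le
    linarith
  refine ⟨R, hRr₀, f R * R ^ (δ:ℝ) / θ' + 1, hC'pos, ?_⟩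
  intro r hr
  have hr0 : (0:ℝ) < r := lt_of_lt_of_le hR0 hr
  have hrR1 : (1:ℝ) ≤ r / R := (one_le_div hR0).mpr hr
  have hrR0 : (0:ℝ) < r / R := lt_of_lt_of_le one_pos hrR1
  set L := Real.logb 2 (r / R) with hLdef
  have hL0 : 0 ≤ L := Real.logb_nonneg (by norm_num) hrR1
  set n := ⌊L⌋₊ with hndef
  have hnL : (n : ℝ) ≤ L := Nat.floor_le hL0
  have hLn : L - 1 ≤ (n : ℝ) := by
    have := Nat.lt_floor_add_one L
    linarith
  have h2n : (2:ℝ) ^ n ≤ r / R := by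
    have : (2:ℝ) ^ (n:ℝ) ≤ (2:ℝ) ^ L :=
      Real.rpow_le_rpow_of_exponent_le (by norm_num) hnL
    rw [Real.rpow_natCast] at this
    rwa [hLdef, Real.rpow_logb (by norm_num) (by norm_num) hrR0] at this
  have hR2n : R * 2 ^ n ≤ r := by
    rw [← le_div_iff₀' hR0]; exact h2n
  have h2npos : (0:ℝ) < 2 ^ n := by positivity
  have hfr2n : f (r / 2 ^ n) ≤ f R := by
    apply hmono R _ hR0
    rw [le_div_iff₀ h2npos]; linarith [hR2n]
  have step1 : f r ≤ θ' ^ n * f R := by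
    calc f r ≤ θ' ^ n * f (r / 2 ^ n) := iter n r hR2n
      _ ≤ θ' ^ n * f R := mul_le_mul_of_nonneg_left hfr2n (by positivity)
  have hpow : (θ' : ℝ) ^ n ≤ (r / R) ^ (-δ : ℝ) / θ' := by
    have h1 : (θ':ℝ) ^ (n:ℝ) ≤ θ' ^ (L - 1 : ℝ) :=
      Real.rpow_le_rpow_of_exponent_ge hθ'0 hθ'1.le hLn
    rw [Real.rpow_natCast] at h1
    have h2 : (θ':ℝ) ^ (L - 1 : ℝ) = θ' ^ (L:ℝ) / θ' := by
      rw [Real.rpow_sub hθ'0, Real.rpow_one]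
    have h3 : (θ':ℝ) ^ (L:ℝ) = (r / R) ^ (-δ : ℝ) := by
      have hθ'eq : θ' = (2:ℝ) ^ (-δ : ℝ) := by
        rw [← hlogθ', Real.rpow_logb (by norm_num) (by norm_num) hθ'0]
      rw [hθ'eq, ← Real.rpow_mul (by norm_num : (0:ℝ) ≤ 2), mul_comm,
        Real.rpow_mul (by norm_num : (0:ℝ) ≤ 2),
        Real.rpow_logb (by norm_num) (by norm_num) hrR0]
    rw [h2, h3] at h1
    exact h1
  have hdiv : (r / R) ^ (-δ : ℝ) = r ^ (-δ : ℝ) * R ^ (δ : ℝ) := by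
    rw [Real.div_rpow hr0.le hR0.le, Real.rpow_neg hR0.le]
    field_simp
  calc f r ≤ θ' ^ n * f R := step1
    _ ≤ (r / R) ^ (-δ : ℝ) / θ' * f R :=
        mul_le_mul_of_nonneg_right hpow (hf0 R hR0)
    _ = f R * R ^ (δ : ℝ) / θ' * r ^ (-δ : ℝ) := by rw [hdiv]; ring
    _ ≤ (f R * R ^ (δ : ℝ) / θ' + 1) * r ^ (-δ : ℝ) := by
        apply mul_le_mul_of_nonneg_right _ (Real.rpow_nonneg hr0.le _)
        linarith
end

section
/- Fix 3 < p ≤ 5. Define W : ℝ³ → ℝ by W(x) = 3^{2/(p−1)}·(3|x|² + 1)^{−1/2} and φ_p : ℝ³ → ℝ by φ_p(x) = (3|x|² + 1)^{(p−5)/2}. Then W is smooth on ℝ³ and satisfies −ΔW = 3^{−2(5−p)/(p−1)}·W⁵ on ℝ³; consequently −ΔW(x) = φ_p(x)·|W(x)|^{p−1}·W(x) for all x ∈ ℝ³, and moreover 0 < φ_p(x) ≤ 1 for all x. -/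
open Set

local notation "E3" => EuclideanSpace ℝ (Fin 3)

noncomputable def Qf (x : EuclideanSpace ℝ (Fin 3)) : ℝ := 3 * ‖x‖ ^ 2 + 1

lemma Qf_pos (x : E3) : 0 < Qf x := by unfold Qf; positivity

lemma hasFDerivAt_Qf (x : E3) : HasFDerivAt Qf ((6:ℝ) • innerSL ℝ x) x := by
  have h := ((hasFDerivAt_id x).norm_sq.const_mul (3:ℝ)).add_const (1:ℝ)
  refine h.congr_fderiv ?_
  ext v
  simp [smul_smul]
  ring

lemma hasFDerivAt_rpow_Qf (r : ℝ) (x : E3) :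
    HasFDerivAt (fun y : E3 => Qf y ^ r) ((6 * r * Qf x ^ (r - 1)) • innerSL ℝ x) x := by
  have h := (hasFDerivAt_Qf x).rpow_const (p := r) (Or.inl (Qf_pos x).ne')
  refine h.congr_fderiv ?_
  rw [smul_smul]
  congr 1
  ring

lemma hasFDerivAt_W (c : ℝ) (x : E3) :
    HasFDerivAt (fun y : E3 => c * Qf y ^ (-(1/2) : ℝ))
      ((c * (-3) * Qf x ^ (-(3/2) : ℝ)) • innerSL ℝ x) x := by
  have h := (hasFDerivAt_rpow_Qf (-(1/2)) x).const_mul c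
  have he : (-(1/2) : ℝ) - 1 = -(3/2) := by norm_num
  rw [he] at h
  refine h.congr_fderiv ?_
  rw [smul_smul]
  congr 1
  ring

lemma hasFDerivAt_inner_right (v x : E3) :
    HasFDerivAt (fun y : E3 => (inner ℝ y v : ℝ)) (innerSL ℝ v) x := by
  have : (fun y : E3 => (inner ℝ y v : ℝ)) = fun y : E3 => (inner ℝ v y : ℝ) :=
    funext fun y => real_inner_comm _ _
  rw [this]
  exact (innerSL ℝ v).hasFDerivAt

lemma second_deriv (c : ℝ) (x : E3) (i : Fin 3) :
    fderiv ℝ (fun y : E3 => fderiv ℝ (fun z : E3 => c * Qf z ^ (-(1/2) : ℝ)) y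
        (EuclideanSpace.single i 1)) x (EuclideanSpace.single i 1)
      = 27 * c * Qf x ^ (-(5/2) : ℝ) * (x i) ^ 2 + (-3) * c * Qf x ^ (-(3/2) : ℝ) := by
  set v : E3 := EuclideanSpace.single i 1 with hv
  have hfun : (fun y : E3 => fderiv ℝ (fun z : E3 => c * Qf z ^ (-(1/2) : ℝ)) y v)
      = fun y : E3 => (Qf y ^ (-(3/2) : ℝ)) * ((c * (-3)) * (inner ℝ y v : ℝ)) := by
    funext y
    rw [(hasFDerivAt_W c y).fderiv]
    simp
    ring
  rw [hfun]
  have h2 := (hasFDerivAt_inner_right v x).const_mul (c * (-3))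
  have hprod := (hasFDerivAt_rpow_Qf (-(3/2)) x).fun_mul h2
  rw [hprod.fderiv]
  have hvv : (inner ℝ v v : ℝ) = 1 := by
    rw [real_inner_self_eq_norm_sq, hv, EuclideanSpace.norm_single]
    norm_num
  have hxv : (inner ℝ x v : ℝ) = x i := by
    rw [hv, EuclideanSpace.inner_single_right]
    simp
  have he : (-(3/2) : ℝ) - 1 = -(5/2) := by norm_num
  have hq : Qf x ^ (-(3/2) : ℝ) = Qf x * Qf x ^ (-(5/2) : ℝ) := by
    rw [show (-(3/2) : ℝ) = 1 + -(5/2) by norm_num, Real.rpow_add (Qf_pos x),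
      Real.rpow_one]
  simp only [ContinuousLinearMap.add_apply, ContinuousLinearMap.smul_apply,
    innerSL_apply_apply, smul_eq_mul, he, hvv, hxv, hq]
  ring

lemma norm_sq_eq_sum (x : E3) : ‖x‖ ^ 2 = ∑ i : Fin 3, (x i) ^ 2 := by
  rw [EuclideanSpace.norm_eq, Real.sq_sqrt (by positivity)]
  simp [sq_abs]

lemma laplacian_value (c : ℝ) (x : E3) :
    laplacian (fun y : E3 => c * Qf y ^ (-(1/2) : ℝ)) x
      = -9 * c * Qf x ^ (-(5/2) : ℝ) := by
  unfold laplacian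
  rw [Finset.sum_congr rfl fun i _ => second_deriv c x i]
  rw [Finset.sum_add_distrib, ← Finset.mul_sum, ← norm_sq_eq_sum, Finset.sum_const]
  have hq : Qf x ^ (-(3/2) : ℝ) = Qf x * Qf x ^ (-(5/2) : ℝ) := by
    rw [show (-(3/2) : ℝ) = 1 + -(5/2) by norm_num, Real.rpow_add (Qf_pos x),
      Real.rpow_one]
  rw [hq]
  show 27 * c * Qf x ^ (-(5/2) : ℝ) * ‖x‖ ^ 2 + 3 • (-3 * c * (Qf x * Qf x ^ (-(5/2) : ℝ)))
      = -9 * c * Qf x ^ (-(5/2) : ℝ)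
  rw [show Qf x = 3 * ‖x‖ ^ 2 + 1 from rfl]
  ring

lemma Qf_rpow_pow (x : E3) : (Qf x ^ (-(1/2) : ℝ)) ^ (5:ℕ) = Qf x ^ (-(5/2) : ℝ) := by
  rw [← Real.rpow_natCast (Qf x ^ (-(1/2) : ℝ)) 5, ← Real.rpow_mul (Qf_pos x).le]
  norm_num


/-- For `3 < p ≤ 5`, the function `W(x) = 3^{2/(p-1)} (3|x|²+1)^{-1/2}`
is smooth, solves `-ΔW = 3^{-2(5-p)/(p-1)} W⁵`, hence solves
`-ΔW = φ_p(x) |W|^{p-1} W` with `φ_p(x) = (3|x|²+1)^{(p-5)/2}`, and `0 < φ_p ≤ 1`. -/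
theorem explicit_ground_state (p : ℝ) (hp : 3 < p) (hp5 : p ≤ 5)
    (W φp : EuclideanSpace ℝ (Fin 3) → ℝ)
    (hW : W = fun x => (3 : ℝ) ^ (2 / (p - 1)) * ((3 * ‖x‖ ^ 2 + 1 : ℝ)) ^ (-(1 / 2) : ℝ))
    (hφp : φp = fun x => ((3 * ‖x‖ ^ 2 + 1 : ℝ)) ^ ((p - 5) / 2)) :
    ContDiff ℝ (⊤ : ℕ∞) W ∧
    (∀ x, -laplacian W x = (3 : ℝ) ^ (-(2 * (5 - p)) / (p - 1)) * (W x) ^ 5) ∧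
    (∀ x, -laplacian W x = φp x * |W x| ^ (p - 1) * W x) ∧
    (∀ x, 0 < φp x ∧ φp x ≤ 1) := by
  have hp1 : p - 1 ≠ 0 := by linarith
  set c : ℝ := (3 : ℝ) ^ (2 / (p - 1)) with hc
  have hc0 : 0 < c := Real.rpow_pos_of_pos (by norm_num) _
  have hWQ : W = fun x : E3 => c * Qf x ^ (-(1/2) : ℝ) := hW
  have hQf : ∀ x : E3, (1:ℝ) ≤ Qf x := fun x => by
    have := sq_nonneg ‖x‖; unfold Qf; nlinarith
  have hlap : ∀ x : E3, -laplacian W x = 9 * c * Qf x ^ (-(5/2) : ℝ) := by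
    intro x
    rw [hWQ, laplacian_value]
    ring
  have hWx : ∀ x : E3, W x = c * Qf x ^ (-(1/2) : ℝ) := fun x => by rw [hWQ]
  have hWpos : ∀ x : E3, 0 < W x := fun x => by
    rw [hWx]; exact mul_pos hc0 (Real.rpow_pos_of_pos (Qf_pos x) _)
  refine ⟨?_, ?_, ?_, ?_⟩
  · rw [hWQ]
    refine contDiff_iff_contDiffAt.mpr fun x => contDiffAt_const.mul ?_
    refine ContDiffAt.rpow_const_of_ne ?_ (Qf_pos x).ne'
    exact ((contDiff_const.mul (contDiff_norm_sq ℝ)).add contDiff_const).contDiffAt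
  · intro x
    rw [hlap, hWx, mul_pow, Qf_rpow_pow]
    have hA : (3 : ℝ) ^ (-(2 * (5 - p)) / (p - 1)) * c ^ (5:ℕ) = 9 * c := by
      rw [hc, ← Real.rpow_natCast ((3:ℝ) ^ (2 / (p - 1))) 5,
        ← Real.rpow_mul (by norm_num : (0:ℝ) ≤ 3),
        ← Real.rpow_add (by norm_num : (0:ℝ) < 3),
        show -(2 * (5 - p)) / (p - 1) + 2 / (p - 1) * (5:ℕ) = 2 + 2 / (p - 1) by
          push_cast; field_simp; ring,
        Real.rpow_add (by norm_num : (0:ℝ) < 3)]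
      norm_num
    calc 9 * c * Qf x ^ (-(5/2) : ℝ)
        = ((3 : ℝ) ^ (-(2 * (5 - p)) / (p - 1)) * c ^ (5:ℕ)) * Qf x ^ (-(5/2) : ℝ) := by
          rw [hA]
      _ = _ := by ring
  · intro x
    rw [hlap, hφp, abs_of_pos (hWpos x), hWx]
    have h1 : (c * Qf x ^ (-(1/2) : ℝ)) ^ (p - 1)
        = 9 * Qf x ^ ((-(1/2)) * (p - 1)) := by
      rw [Real.mul_rpow hc0.le (Real.rpow_pos_of_pos (Qf_pos x) _).le,
        ← Real.rpow_mul (Qf_pos x).le, hc,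
        ← Real.rpow_mul (by norm_num : (0:ℝ) ≤ 3),
        show 2 / (p - 1) * (p - 1) = 2 by field_simp,
        show (2:ℝ) = ((2:ℕ):ℝ) by norm_num, Real.rpow_natCast]
      norm_num
    rw [h1]
    have hcomb : Qf x ^ ((p - 5) / 2) * (Qf x ^ ((-(1/2)) * (p - 1)) * Qf x ^ (-(1/2) : ℝ))
        = Qf x ^ (-(5/2) : ℝ) := by
      rw [← Real.rpow_add (Qf_pos x), ← Real.rpow_add (Qf_pos x),
        show (p - 5) / 2 + ((-(1/2)) * (p - 1) + -(1/2)) = -(5/2) by ring]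
    show 9 * c * Qf x ^ (-(5/2) : ℝ)
        = Qf x ^ ((p - 5) / 2) * (9 * Qf x ^ ((-(1/2)) * (p - 1))) * (c * Qf x ^ (-(1/2) : ℝ))
    linear_combination (-9 * c) * hcomb
  · intro x
    rw [hφp]
    refine ⟨Real.rpow_pos_of_pos (by positivity) _, ?_⟩
    exact Real.rpow_le_one_of_one_le_of_nonpos (hQf x) (by linarith)
end
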